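/- arXiv:1012.0725 — 5 statements merged into one kernel-verified Lean document; each statement's English description precedes it below -/
import Mathlib

section
/- Let O_F be a Dedekind domain with fraction field F, and let K be a quadratic field extension of F with O_K the integral closure of O_F in K. Then the map sending a nonzero ideal c ⊆ O_F to O_c = O_F + c·O_K is a bijection from the set of nonzero ideals of O_F onto the set of O_F-orders in K (i.e., O_F-subalgebras of K that are finitely generated O_F-modules spanning K over F). -/
/-!
Fix an `F`-linear form `φ : K → F` with kernel `F·1`. Since `O_F` is integrally closed, two
elements of `O_K` with the same image under `φ` differ by an element of `O_F`, so an
`O_F`-submodule of `O_K` containing `1` is determined by its image under `φ`. Every order lies in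
`O_K`, and `φ(O_F + c·O_K) = c·φ(O_K)`. As `φ(O_K)` is an invertible fractional ideal of the
Dedekind domain `O_F`, every submodule of it is `c·φ(O_K)` for a unique ideal `c`, and the image
of an order, which spans `K`, is nonzero.
-/

open Module Submodule

/-- The `O_F`-submodule `O_F + c·O_K` of `K` attached to an ideal `c` of `O_F`. -/
def orderSubmodule (O_F F K : Type*) [CommRing O_F] [Field F] [Field K]
    [Algebra O_F F] [Algebra F K] [Algebra O_F K] [IsScalarTower O_F F K]
    (c : Ideal O_F) : Submodule O_F K :=
  (1 : Submodule O_F K) ⊔ c • (Subalgebra.toSubmodule (integralClosure O_F K))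

/-- An `O_F`-order in `K`: an `O_F`-submodule of `K` containing `1`, closed under
multiplication, finitely generated as an `O_F`-module, and spanning `K` over `F`. -/
def IsOrderIn (O_F F K : Type*) [CommRing O_F] [Field F] [Field K]
    [Algebra O_F F] [Algebra F K] [Algebra O_F K] [IsScalarTower O_F F K]
    (S : Submodule O_F K) : Prop :=
  (1 : K) ∈ S ∧ (∀ x ∈ S, ∀ y ∈ S, x * y ∈ S) ∧ S.FG ∧
    Submodule.span F (S : Set K) = ⊤

open scoped nonZeroDivisors

theorem Submodule.map_algebraLinearMap_mul {R A : Type*} [CommSemiring R] [CommSemiring A]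
    [Algebra R A] (c : Ideal R) (N : Submodule R A) :
    Submodule.map (Algebra.linearMap R A) c * N = c • N := by
  refine le_antisymm (Submodule.mul_le.mpr ?_) (Submodule.smul_le.mpr ?_)
  · rintro _ ⟨a, ha, rfl⟩ y hy
    rw [Algebra.linearMap_apply, ← Algebra.smul_def]
    exact Submodule.smul_mem_smul ha hy
  · intro a ha y hy
    rw [Algebra.smul_def]
    exact Submodule.mul_mem_mul (Submodule.mem_map_of_mem ha) hy

theorem Subalgebra.ideal_smul_toSubmodule_mul_self {R A : Type*} [CommSemiring R]
    [CommSemiring A] [Algebra R A] (c : Ideal R) (S : Subalgebra R A) :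
    c • S.toSubmodule * S.toSubmodule = c • S.toSubmodule := by
  rw [← Submodule.map_algebraLinearMap_mul, mul_assoc, S.isIdempotentElem_toSubmodule.eq]

theorem FractionalIdeal.coe_coeIdeal_mul {R F : Type*} [CommRing R] [CommRing F] [Algebra R F]
    (c : Ideal R) (I : FractionalIdeal R⁰ F) :
    ((c * I : FractionalIdeal R⁰ F) : Submodule R F) = c • (I : Submodule R F) := by
  rw [FractionalIdeal.coe_mul, FractionalIdeal.coe_coeIdeal, ← Submodule.map_algebraLinearMap_mul]
  rfl

section DedekindDomain

variable {R F : Type*} [CommRing R] [IsDedekindDomain R] [Field F] [Algebra R F]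
  [IsFractionRing R F] {b : Submodule R F}

theorem Submodule.ideal_smul_left_injective (hb : b.FG) (hb0 : b ≠ ⊥) :
    Function.Injective fun c : Ideal R => c • b := by
  obtain ⟨I, rfl⟩ : ∃ I : FractionalIdeal R⁰ F, ↑I = b :=
    ⟨⟨b, FractionalIdeal.isFractional_of_fg hb⟩, rfl⟩
  have hI : I ≠ 0 := mt FractionalIdeal.coeToSubmodule_eq_bot.mpr hb0
  intro c c' h
  refine FractionalIdeal.coeIdeal_injective (K := F) (mul_left_injective₀ hI ?_)
  exact FractionalIdeal.coeToSubmodule_injective <| by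
    simpa only [FractionalIdeal.coe_coeIdeal_mul] using h

theorem Submodule.exists_ideal_smul_eq_of_le (hb : b.FG) (hb0 : b ≠ ⊥) {J : Submodule R F}
    (hJ : J ≤ b) : ∃ c : Ideal R, c • b = J := by
  obtain ⟨I, rfl⟩ : ∃ I : FractionalIdeal R⁰ F, ↑I = b :=
    ⟨⟨b, FractionalIdeal.isFractional_of_fg hb⟩, rfl⟩
  have hI : I ≠ 0 := mt FractionalIdeal.coeToSubmodule_eq_bot.mpr hb0
  obtain ⟨I', rfl⟩ : ∃ I' : FractionalIdeal R⁰ F, ↑I' = J :=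
    ⟨⟨J, FractionalIdeal.isFractional_of_le hJ⟩, rfl⟩
  have hI'I : I' * I⁻¹ ≤ 1 :=
    calc I' * I⁻¹ ≤ I * I⁻¹ := by gcongr; exact hJ
      _ = 1 := mul_inv_cancel₀ hI
  obtain ⟨c, hc⟩ := FractionalIdeal.le_one_iff_exists_coeIdeal.mp hI'I
  exact ⟨c, by rw [← FractionalIdeal.coe_coeIdeal_mul, hc, inv_mul_cancel_right₀ hI]⟩

end DedekindDomain

section IntegralClosure

variable (R F K : Type*) [CommRing R] [Field F] [Field K] [Algebra R F] [Algebra F K]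
  [Algebra R K] [IsScalarTower R F K]

theorem integralClosure_toSubmodule_fg [IsDomain R] [IsIntegrallyClosed R] [IsNoetherianRing R]
    [IsFractionRing R F] [FiniteDimensional F K] [Algebra.IsSeparable F K] :
    (integralClosure R K).toSubmodule.FG :=
  Module.Finite.iff_fg.mp (IsIntegralClosure.finite R F K (integralClosure R K))

theorem span_integralClosure_eq_top [IsDomain R] [IsFractionRing R F]
    [Algebra.IsAlgebraic F K] : Submodule.span F (integralClosure R K : Set K) = ⊤ := by
  have : Algebra.IsAlgebraic R K :=
    (IsFractionRing.comap_isAlgebraic_iff (K := F)).mpr inferInstance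
  refine eq_top_iff.mpr fun x _ => ?_
  obtain ⟨d, hd, hdx⟩ :=
    (Algebra.IsAlgebraic.isAlgebraic (R := R) (A := K) x).exists_integral_multiple
  have hdF : algebraMap R F d ≠ 0 := (IsFractionRing.injective R F).ne_iff' (map_zero _) |>.mpr hd
  have hx : x = (algebraMap R F d)⁻¹ • d • x := by
    rw [← algebraMap_smul F d x, inv_smul_smul₀ hdF]
  rw [hx]
  exact Submodule.smul_mem _ _ (Submodule.subset_span hdx)

variable {R F K}

theorem IsOrderIn.le_integralClosure {S : Submodule R K} (hS : IsOrderIn R F K S) :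
    S ≤ (integralClosure R K).toSubmodule := fun x hx =>
  IsIntegral.of_mem_of_fg (S.toSubalgebra hS.1 fun x y hx hy => hS.2.1 x hx y hy) hS.2.2.1 x hx

end IntegralClosure

theorem exists_ker_eq_span_singleton {F V : Type*} [Field F] [AddCommGroup V] [Module F V]
    (hV : Module.finrank F V = 2) {v : V} (hv : v ≠ 0) :
    ∃ φ : V →ₗ[F] F, LinearMap.ker φ = F ∙ v := by
  have : FiniteDimensional F V := .of_finrank_eq_succ hV
  have hQ : Module.finrank F (V ⧸ F ∙ v) = Module.finrank F F := by
    have := (F ∙ v).finrank_quotient_add_finrank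
    rw [hV, finrank_span_singleton hv] at this
    rw [Module.finrank_self]
    omega
  obtain ⟨e⟩ := FiniteDimensional.nonempty_linearEquiv_of_finrank_eq hQ
  exact ⟨e.toLinearMap ∘ₗ (F ∙ v).mkQ, by
    rw [LinearMap.ker_comp, LinearEquiv.ker, Submodule.comap_bot, Submodule.ker_mkQ]⟩

section Functional

variable {R F K : Type*} [CommRing R] [Field F] [Field K] [Algebra R F] [Algebra F K]
  [Algebra R K] [IsScalarTower R F K] (φ : K →ₗ[F] F)

theorem map_restrictScalars_ne_bot_of_span_eq_top (hφ : φ ≠ 0) {S : Submodule R K}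
    (hS : Submodule.span F (S : Set K) = ⊤) : S.map (φ.restrictScalars R) ≠ ⊥ := by
  refine fun h => hφ (LinearMap.ker_eq_top.mp (eq_top_iff.mpr ?_))
  rw [← hS, Submodule.span_le]
  exact fun x hx => (Submodule.mem_bot R).mp (h ▸ Submodule.mem_map_of_mem hx)

theorem map_restrictScalars_orderSubmodule (hφ : φ 1 = 0) (c : Ideal R) :
    (orderSubmodule R F K c).map (φ.restrictScalars R) =
      c • (integralClosure R K).toSubmodule.map (φ.restrictScalars R) := by
  have hone : (1 : Submodule R K).map (φ.restrictScalars R) = ⊥ := by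
    rw [Submodule.one_eq_span, Submodule.map_span, Set.image_singleton,
      LinearMap.restrictScalars_apply, hφ, Submodule.span_singleton_eq_bot.mpr rfl]
  rw [orderSubmodule, Submodule.map_sup, hone, Submodule.map_smul'', bot_sup_eq]

theorem sub_mem_range_of_map_eq [IsIntegrallyClosed R] [IsFractionRing R F]
    (hφ : LinearMap.ker φ ≤ F ∙ 1) {x y : K} (hx : IsIntegral R x) (hy : IsIntegral R y)
    (hxy : φ x = φ y) : ∃ r : R, x = y + algebraMap R K r := by
  have hker : x - y ∈ LinearMap.ker φ := by rw [LinearMap.mem_ker, map_sub, hxy, sub_self]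
  obtain ⟨a, ha⟩ := Submodule.mem_span_singleton.mp (hφ hker)
  have hxya : x - y = algebraMap F K a := by rw [← ha, Algebra.smul_def, mul_one]
  obtain ⟨r, hr⟩ := IsIntegrallyClosed.isIntegral_iff.mp
    (IsIntegral.tower_bot_of_field (hxya ▸ hx.sub hy) : IsIntegral R a)
  exact ⟨r, by rw [IsScalarTower.algebraMap_apply R F K, hr, ← hxya, add_sub_cancel]⟩

theorem eq_of_map_restrictScalars_eq [IsIntegrallyClosed R] [IsFractionRing R F]
    (hφ : LinearMap.ker φ ≤ F ∙ 1) {S T : Submodule R K}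
    (hS : S ≤ (integralClosure R K).toSubmodule) (hT : T ≤ (integralClosure R K).toSubmodule)
    (hS1 : (1 : K) ∈ S) (hT1 : (1 : K) ∈ T)
    (hST : S.map (φ.restrictScalars R) = T.map (φ.restrictScalars R)) : S = T := by
  have key : ∀ {S T : Submodule R K}, S ≤ (integralClosure R K).toSubmodule →
      T ≤ (integralClosure R K).toSubmodule → (1 : K) ∈ T →
      S.map (φ.restrictScalars R) ≤ T.map (φ.restrictScalars R) → S ≤ T := by
    intro S T hS hT hT1 hST x hx
    obtain ⟨y, hy, hyx⟩ := hST (Submodule.mem_map_of_mem hx)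
    obtain ⟨r, rfl⟩ := sub_mem_range_of_map_eq φ hφ (hS hx) (hT hy) hyx.symm
    rw [Algebra.algebraMap_eq_smul_one]
    exact T.add_mem hy (T.smul_mem r hT1)
  exact le_antisymm (key hS hT hT1 hST.le) (key hT hS hS1 hST.ge)

end Functional

section OrderSubmodule

variable {R F K : Type*} [CommRing R] [Field F] [Field K] [Algebra R F] [Algebra F K]
  [Algebra R K] [IsScalarTower R F K] (c : Ideal R)

theorem one_mem_orderSubmodule : (1 : K) ∈ orderSubmodule R F K c :=
  Submodule.mem_sup_left (Submodule.one_le.mp le_rfl)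

theorem orderSubmodule_le_integralClosure :
    orderSubmodule R F K c ≤ (integralClosure R K).toSubmodule :=
  sup_le (Submodule.one_le.mpr (Subalgebra.mem_toSubmodule _ |>.mpr (one_mem _)))
    Submodule.smul_le_right

theorem orderSubmodule_mul_self_le :
    orderSubmodule R F K c * orderSubmodule R F K c ≤ orderSubmodule R F K c := by
  have hMM : c • (integralClosure R K).toSubmodule * c • (integralClosure R K).toSubmodule ≤
      c • (integralClosure R K).toSubmodule :=
    (mul_le_mul' le_rfl Submodule.smul_le_right).trans
      (Subalgebra.ideal_smul_toSubmodule_mul_self c _).le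
  rw [orderSubmodule, Submodule.sup_mul, one_mul, Submodule.mul_sup, mul_one]
  exact sup_le le_rfl (sup_le le_sup_right (hMM.trans le_sup_right))

variable {c}

theorem isOrderIn_orderSubmodule [IsNoetherianRing R] [IsFractionRing R F]
    (hfg : (integralClosure R K).toSubmodule.FG)
    (hspan : Submodule.span F (integralClosure R K : Set K) = ⊤) (hc : c ≠ ⊥) :
    IsOrderIn R F K (orderSubmodule R F K c) := by
  refine ⟨one_mem_orderSubmodule c,
    fun x hx y hy => orderSubmodule_mul_self_le c (Submodule.mul_mem_mul hx hy), ?_, ?_⟩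
  · rw [orderSubmodule, Submodule.one_eq_span]
    exact (Submodule.fg_span_singleton 1).sup (Submodule.FG.smul (IsNoetherian.noetherian c) hfg)
  · obtain ⟨a, ha, ha0⟩ := Submodule.exists_mem_ne_zero_of_ne_bot hc
    have haF : algebraMap R F a ≠ 0 :=
      (IsFractionRing.injective R F).ne_iff' (map_zero _) |>.mpr ha0
    refine eq_top_iff.mpr (hspan ▸ Submodule.span_le.mpr fun x hx => ?_)
    rw [SetLike.mem_coe, ← inv_smul_smul₀ haF x, algebraMap_smul]
    exact Submodule.smul_mem _ _
      (Submodule.subset_span (Submodule.mem_sup_right (Submodule.smul_mem_smul ha hx)))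

end OrderSubmodule

theorem orders_biject_nonzero_ideals_general
    (O_F F K : Type*) [CommRing O_F] [IsDedekindDomain O_F]
    [Field F] [Algebra O_F F] [IsFractionRing O_F F]
    [Field K] [Algebra F K] [Algebra O_F K] [IsScalarTower O_F F K]
    [Algebra.IsSeparable F K] (hquad : Module.finrank F K = 2) :
    (∀ c : Ideal O_F, c ≠ ⊥ → IsOrderIn O_F F K (orderSubmodule O_F F K c)) ∧
    (∀ S : Submodule O_F K, IsOrderIn O_F F K S →
      ∃! c : Ideal O_F, c ≠ ⊥ ∧ orderSubmodule O_F F K c = S) := by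
  have : FiniteDimensional F K := .of_finrank_eq_succ hquad
  have hfg := integralClosure_toSubmodule_fg O_F F K
  have hspan := span_integralClosure_eq_top O_F F K
  obtain ⟨φ, hφ⟩ := exists_ker_eq_span_singleton hquad (one_ne_zero (α := K))
  have hφ0 : φ ≠ 0 := by
    rintro rfl
    have := finrank_span_singleton (K := F) (one_ne_zero (α := K))
    rw [← hφ, LinearMap.ker_zero, finrank_top, hquad] at this
    omega
  have hφ1 : φ 1 = 0 := LinearMap.mem_ker.mp (hφ ▸ Submodule.mem_span_singleton_self 1)
  set b := (integralClosure O_F K).toSubmodule.map (φ.restrictScalars O_F)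
  have hb0 : b ≠ ⊥ := map_restrictScalars_ne_bot_of_span_eq_top φ hφ0 hspan
  have himage (c : Ideal O_F) : (orderSubmodule O_F F K c).map (φ.restrictScalars O_F) = c • b :=
    map_restrictScalars_orderSubmodule φ hφ1 c
  refine ⟨fun c hc => isOrderIn_orderSubmodule hfg hspan hc, fun S hS => ?_⟩
  obtain ⟨c, hc⟩ := Submodule.exists_ideal_smul_eq_of_le (hfg.map _) hb0
    (Submodule.map_mono hS.le_integralClosure)
  have hcS : orderSubmodule O_F F K c = S :=
    eq_of_map_restrictScalars_eq φ hφ.le (orderSubmodule_le_integralClosure c)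
      hS.le_integralClosure (one_mem_orderSubmodule c) hS.1 (by rw [himage, hc])
  refine ⟨c, ⟨?_, hcS⟩, fun c' ⟨_, hc'S⟩ =>
    Submodule.ideal_smul_left_injective (hfg.map _) hb0 ?_⟩
  · rintro rfl
    exact map_restrictScalars_ne_bot_of_span_eq_top φ hφ0 hS.2.2.2
      (by rw [← hc, Submodule.bot_smul])
  · show c' • b = c • b
    rw [← himage, ← himage, hc'S, hcS]

/-- over a Dedekind domain `O_F` with fraction field `F` and a separable
quadratic field extension `K/F`, the map `c ↦ O_F + c·O_K` is a bijection from the set of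
nonzero ideals of `O_F` onto the set of `O_F`-orders in `K`. -/
theorem orders_biject_nonzero_ideals
    (O_F F K : Type*) [CommRing O_F] [IsDomain O_F] [IsDedekindDomain O_F]
    [Field F] [Algebra O_F F] [IsFractionRing O_F F]
    [Field K] [Algebra F K] [Algebra O_F K] [IsScalarTower O_F F K]
    [Algebra.IsSeparable F K] (hquad : Module.finrank F K = 2) :
    (∀ c : Ideal O_F, c ≠ ⊥ → IsOrderIn O_F F K (orderSubmodule O_F F K c)) ∧
    (∀ S : Submodule O_F K, IsOrderIn O_F F K S →
      ∃! c : Ideal O_F, c ≠ ⊥ ∧ orderSubmodule O_F F K c = S) :=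
  orders_biject_nonzero_ideals_general O_F F K hquad
end

section
/- Let O_F be a Dedekind domain with fraction field F, K a quadratic étale F-algebra, and V a free K-module of rank one. Two full O_F-lattices Λ₁, Λ₂ in V are K^×-homothetic (i.e., Λ₂ = λΛ₁ for some λ ∈ K^×) if and only if they have the same multiplier order O(Λ₁) = O(Λ₂) and define the same class in the Picard group of that order. -/
/-! Multiplication by a unit `a` is an `O_F`-linear bijection `Λ₁ ≃ aΛ₁` commuting with `K`, and
`aΛ₁` has the same multipliers as `Λ₁`. Conversely, let `f : Λ₁ ≃ Λ₂` commute with `O(Λ₁)` and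
write `V = K e` with `d • e ∈ Λ₁`, `d ≠ 0` in `O_F`. Every `c ∈ K` has a multiple `d' c ∈ O(Λ₁)`
with `0 ≠ d' ∈ O_F`, because `Λ₁` is finitely generated and spans `V` over `F`. For `x = c • e`
this gives `d d' • f x = f ((d' c) • (d • e)) = d' c • f (d • e)`, so `f` is multiplication by
`λ = f (d • e) / d`. Finally `λ V ⊇ Λ₂` spans `V` over `F`, which forces `λ` to be a unit. -/

open Module Submodule

/-- The multiplier order `O(Λ) = {a ∈ K : aΛ ⊆ Λ}` of a lattice `Λ`,
as an `O_F`-subalgebra of `K`. -/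
def multiplierOrder (K : Type*) {O_F V : Type*} [CommRing O_F] [CommRing K]
    [Algebra O_F K] [AddCommGroup V] [Module K V] [Module O_F V]
    [IsScalarTower O_F K V] (Λ : Submodule O_F V) : Subalgebra O_F K where
  carrier := {a : K | ∀ x ∈ Λ, a • x ∈ Λ}
  add_mem' := fun {a b} ha hb x hx => by
    rw [add_smul]; exact Λ.add_mem (ha x hx) (hb x hx)
  mul_mem' := fun {a b} ha hb x hx => by
    rw [mul_smul]; exact ha _ (hb x hx)
  one_mem' := fun x hx => by rw [one_smul]; exact hx
  zero_mem' := fun x hx => by rw [zero_smul]; exact Λ.zero_mem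
  algebraMap_mem' := fun r x hx => by
    rw [algebraMap_smul]; exact Λ.smul_mem r hx

open scoped nonZeroDivisors

theorem mem_multiplierOrder {R K V : Type*} [CommRing R] [CommRing K] [Algebra R K]
    [AddCommGroup V] [Module K V] [Module R V] [IsScalarTower R K V] {Λ : Submodule R V}
    {c : K} :
    c ∈ multiplierOrder K Λ ↔ ∀ x ∈ Λ, c • x ∈ Λ :=
  Iff.rfl

section Homothety

variable {R K V : Type*} [CommRing R] [CommRing K] [Algebra R K] [AddCommGroup V] [Module R V]
  [Module K V] [IsScalarTower R K V] {Λ₁ Λ₂ : Submodule R V} (a : Kˣ)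

theorem map_toLinearEquiv_eq_of_image_smul (h : (Λ₂ : Set V) = (fun x => (a : K) • x) '' Λ₁) :
    Λ₁.map (DistribMulAction.toLinearEquiv R V a : V →ₗ[R] V) = Λ₂ :=
  SetLike.coe_injective (by rw [map_coe, h]; rfl)

def homothetyEquiv (h : (Λ₂ : Set V) = (fun x => (a : K) • x) '' Λ₁) : Λ₁ ≃ₗ[R] Λ₂ :=
  (DistribMulAction.toLinearEquiv R V a).ofSubmodules Λ₁ Λ₂
    (map_toLinearEquiv_eq_of_image_smul a h)

@[simp]
theorem coe_homothetyEquiv_apply (h : (Λ₂ : Set V) = (fun x => (a : K) • x) '' Λ₁) (x : Λ₁) :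
    (homothetyEquiv a h x : V) = (a : K) • (x : V) :=
  rfl

theorem multiplierOrder_eq_of_image_smul (h : (Λ₂ : Set V) = (fun x => (a : K) • x) '' Λ₁) :
    multiplierOrder K Λ₁ = multiplierOrder K Λ₂ := by
  have hmem : ∀ x, (a : K) • x ∈ Λ₂ ↔ x ∈ Λ₁ := fun x => by
    rw [← SetLike.mem_coe, h]
    exact (MulAction.injective (β := V) a).mem_set_image
  ext c
  change _ ↔ ∀ y ∈ (Λ₂ : Set V), c • y ∈ Λ₂
  rw [mem_multiplierOrder, h, Set.forall_mem_image]
  simp only [smul_comm c (a : K), hmem, SetLike.mem_coe]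

end Homothety

theorem smul_right_injective_of_mem_nonZeroDivisors {R V : Type*} (S : Type*) [CommRing R]
    [CommRing S] [Algebra R S] [IsFractionRing R S] [AddCommGroup V] [Module R V] [Module S V]
    [IsScalarTower R S V] {d : R} (hd : d ∈ R⁰) : Function.Injective fun v : V => d • v :=
  fun v w h => by
    simpa only [← algebraMap_smul S d, (IsLocalization.map_units S ⟨d, hd⟩).smul_left_cancel]
      using h

theorem Module.Basis.surjective_smul_default {ι K V : Type*} [Unique ι] [CommRing K]
    [AddCommGroup V] [Module K V] (b : Basis ι K V) :
    Function.Surjective fun c : K => c • b default := by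
  have hspan : ∀ v : V, ∃ c : K, c • b default = v := by
    simpa [span_singleton_eq_top_iff, Set.range_unique] using b.span_eq
  exact hspan

theorem Module.Basis.eq_one_of_smul_eq_self {ι K V : Type*} [CommRing K]
    [AddCommGroup V] [Module K V] (b : Basis ι K V) {c : K} {i : ι} (h : c • b i = b i) :
    c = 1 := by
  simpa using congrArg (fun v => b.repr v i) h

section FractionField

variable {R S K V : Type*} [CommRing R] [CommRing S] [Algebra R S] [IsFractionRing R S]
  [AddCommGroup V] [Module R V] [Module S V] [IsScalarTower R S V] {Λ : Submodule R V}

theorem smul_mk'_one_smul {d : R} (hd : d ∈ R⁰) (v : V) :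
    d • (IsLocalization.mk' S 1 (⟨d, hd⟩ : R⁰) • v) = v := by
  rw [← algebraMap_smul S, smul_smul, IsLocalization.mk'_spec'_mk, map_one, one_smul]

theorem exists_smul_mem_of_span_eq_top (hΛ : span S (Λ : Set V) = ⊤) (v : V) :
    ∃ d ∈ R⁰, d • v ∈ Λ := by
  obtain ⟨y, hy, d, rfl⟩ := (IsLocalization.mem_span_iff R⁰).mp (hΛ ▸ mem_top : v ∈ span S Λ)
  rw [span_eq] at hy
  exact ⟨d, d.2, by rwa [smul_mk'_one_smul d.2]⟩

theorem exists_smul_le_of_span_eq_top (hΛ : span S (Λ : Set V) = ⊤) {N : Submodule R V}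
    (hN : N.FG) : ∃ d ∈ R⁰, ∀ x ∈ N, d • x ∈ Λ := by
  induction N, hN using Submodule.fg_induction with
  | singleton v =>
    obtain ⟨d, hd, hdv⟩ := exists_smul_mem_of_span_eq_top hΛ v
    refine ⟨d, hd, fun x hx => ?_⟩
    obtain ⟨r, rfl⟩ := mem_span_singleton.mp hx
    rw [smul_comm]
    exact Λ.smul_mem r hdv
  | sup N₁ N₂ _ _ ih₁ ih₂ =>
    obtain ⟨d₁, hd₁, hN₁⟩ := ih₁
    obtain ⟨d₂, hd₂, hN₂⟩ := ih₂
    refine ⟨d₂ * d₁, mul_mem hd₂ hd₁, fun x hx => ?_⟩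
    obtain ⟨x₁, hx₁, x₂, hx₂, rfl⟩ := mem_sup.mp hx
    rw [smul_add, mul_smul, mul_comm, mul_smul]
    exact Λ.add_mem (Λ.smul_mem _ (hN₁ x₁ hx₁)) (Λ.smul_mem _ (hN₂ x₂ hx₂))

variable [CommRing K] [Algebra R K] [Module K V] [IsScalarTower R K V]

theorem exists_algebraMap_mul_mem_multiplierOrder (hfg : Λ.FG)
    (hΛ : span S (Λ : Set V) = ⊤) (c : K) :
    ∃ d ∈ R⁰, algebraMap R K d * c ∈ multiplierOrder K Λ := by
  obtain ⟨d, hd, hdc⟩ := exists_smul_le_of_span_eq_top hΛ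
    (hfg.map ((LinearMap.lsmul K V c).restrictScalars R))
  refine ⟨d, hd, fun x hx => ?_⟩
  rw [mul_smul, algebraMap_smul]
  exact hdc _ (mem_map_of_mem hx)

theorem exists_eq_smul_of_map_smul (hfg : Λ.FG) (hΛ : span S (Λ : Set V) = ⊤) {e : V}
    (he : Function.Surjective fun c : K => c • e) (φ : Λ →ₗ[R] V)
    (hφ : ∀ a ∈ multiplierOrder K Λ, ∀ x : Λ, ∀ h : a • (x : V) ∈ Λ,
      φ ⟨a • (x : V), h⟩ = a • φ x) :
    ∃ l : K, ∀ x : Λ, φ x = l • (x : V) := by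
  obtain ⟨d, hd, hde⟩ := exists_smul_mem_of_span_eq_top hΛ e
  obtain ⟨l, hl : l • e = _⟩ := he (IsLocalization.mk' S 1 (⟨d, hd⟩ : R⁰) • φ ⟨d • e, hde⟩)
  refine ⟨l, fun x => ?_⟩
  obtain ⟨c, hc : c • e = x⟩ := he x
  obtain ⟨d', hd', hd'c⟩ := exists_algebraMap_mul_mem_multiplierOrder hfg hΛ c
  have hx : (algebraMap R K d' * c) • d • e = (d * d') • (x : V) := by
    rw [← hc, ← algebraMap_smul K d, ← algebraMap_smul K (d * d'), smul_smul, smul_smul,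
      map_mul]
    ring_nf
  refine smul_right_injective_of_mem_nonZeroDivisors S (mul_mem hd hd') ?_
  calc (d * d') • φ x = φ ((d * d') • x) := (φ.map_smul _ _).symm
    _ = φ ⟨(algebraMap R K d' * c) • d • e, hd'c _ hde⟩ := congrArg φ (Subtype.ext hx.symm)
    _ = (algebraMap R K d' * c) • d •
          (IsLocalization.mk' S 1 (⟨d, hd⟩ : R⁰) • φ ⟨d • e, hde⟩) := by
        rw [hφ _ hd'c ⟨d • e, hde⟩, smul_mk'_one_smul]
    _ = (d * d') • l • (x : V) := by
        rw [← hl, smul_comm d l, smul_comm _ l, hx, smul_comm l]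

theorem isUnit_of_subset_range_smul {ι : Type*} [Unique ι] (b : Basis ι K V)
    (hΛ : span S (Λ : Set V) = ⊤) {l : K}
    (hl : (Λ : Set V) ⊆ Set.range fun x => l • x) : IsUnit l := by
  obtain ⟨d, hd, hde⟩ := exists_smul_mem_of_span_eq_top hΛ (b default)
  obtain ⟨x, hx : l • x = d • b default⟩ := hl hde
  obtain ⟨c, rfl : c • b default = x⟩ := b.surjective_smul_default x
  obtain ⟨k, hk : k • b default = _⟩ :=
    b.surjective_smul_default (IsLocalization.mk' S 1 (⟨d, hd⟩ : R⁰) • b default)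
  have hlck : (l * (c * k)) • b default = b default :=
    calc (l * (c * k)) • b default = k • l • c • b default := by
          rw [smul_smul, smul_smul]
          ring_nf
      _ = d • k • b default := by rw [hx, smul_comm]
      _ = b default := by rw [hk, smul_mk'_one_smul]
  exact IsUnit.of_mul_eq_one _ (b.eq_one_of_smul_eq_self hlck)

end FractionField

theorem coe_eq_image_smul_of_linearEquiv {R K V : Type*} [CommRing R] [CommRing K]
    [AddCommGroup V] [Module R V] [Module K V] {Λ₁ Λ₂ : Submodule R V} (f : Λ₁ ≃ₗ[R] Λ₂) {l : K}
    (hl : ∀ x : Λ₁, (f x : V) = l • (x : V)) : (Λ₂ : Set V) = (fun x => l • x) '' Λ₁ := by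
  ext y
  constructor
  · intro hy
    exact ⟨f.symm ⟨y, hy⟩, (f.symm _).2, by dsimp only; rw [← hl, f.apply_symm_apply]⟩
  · rintro ⟨x, hx, rfl⟩
    dsimp only
    rw [SetLike.mem_coe, ← hl ⟨x, hx⟩]
    exact (f _).2


theorem homothetic_iff_same_order_and_picard_class_general
    (O_F F K V : Type*) [CommRing O_F]
    [Field F] [Algebra O_F F] [IsFractionRing O_F F]
    [CommRing K] [Algebra O_F K]
    [AddCommGroup V] [Module K V] [Module F V]
    [Module O_F V] [IsScalarTower O_F K V] [IsScalarTower O_F F V]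
    (b : Basis (Fin 1) K V)
    (Λ₁ Λ₂ : Submodule O_F V)
    (h₁ : Λ₁.FG ∧ Submodule.span F (Λ₁ : Set V) = ⊤)
    (h₂ : Λ₂.FG ∧ Submodule.span F (Λ₂ : Set V) = ⊤) :
    (∃ a : Kˣ, (Λ₂ : Set V) = (fun x => (a : K) • x) '' (Λ₁ : Set V)) ↔
    (multiplierOrder K Λ₁ = multiplierOrder K Λ₂ ∧
      ∃ f : Λ₁ ≃ₗ[O_F] Λ₂, ∀ a ∈ multiplierOrder K Λ₁, ∀ x : Λ₁,
        ∀ h : a • (x : V) ∈ Λ₁, ((f ⟨a • (x : V), h⟩ : V) = a • ((f x : V)))) := by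
  constructor
  · rintro ⟨a, ha⟩
    refine ⟨multiplierOrder_eq_of_image_smul a ha, homothetyEquiv a ha, fun c _ x _ => ?_⟩
    simp only [coe_homothetyEquiv_apply]
    exact smul_comm _ _ _
  · rintro ⟨-, f, hf⟩
    obtain ⟨l, hl⟩ := exists_eq_smul_of_map_smul h₁.1 h₁.2 b.surjective_smul_default
      (Λ₂.subtype ∘ₗ f.toLinearMap) hf
    have himage := coe_eq_image_smul_of_linearEquiv f hl
    obtain ⟨u, rfl⟩ := isUnit_of_subset_range_smul b h₂.2 (himage ▸ Set.image_subset_range _ _)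
    exact ⟨u, himage⟩

/-- two full `O_F`-lattices in a free rank-one module `V` over a quadratic
étale `F`-algebra `K` are `K^×`-homothetic if and only if they have the same multiplier
order `O(Λ₁) = O(Λ₂)` and define the same class in the Picard group of that order, the
latter condition being expressed by the existence of an `O(Λ₁)`-linear isomorphism
`Λ₁ ≃ Λ₂` (both being rank-one projective `O(Λ₁)`-modules). -/
theorem homothetic_iff_same_order_and_picard_class
    (O_F F K V : Type*) [CommRing O_F] [IsDomain O_F] [IsDedekindDomain O_F]
    [Field F] [Algebra O_F F] [IsFractionRing O_F F]
    [CommRing K] [IsSemisimpleRing K] [Algebra F K] [Algebra O_F K]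
    [IsScalarTower O_F F K] (hquad : Module.finrank F K = 2)
    [AddCommGroup V] [Module K V] [Module F V] [IsScalarTower F K V]
    [Module O_F V] [IsScalarTower O_F K V] [IsScalarTower O_F F V]
    (b : Basis (Fin 1) K V)
    (Λ₁ Λ₂ : Submodule O_F V)
    (h₁ : Λ₁.FG ∧ Submodule.span F (Λ₁ : Set V) = ⊤)
    (h₂ : Λ₂.FG ∧ Submodule.span F (Λ₂ : Set V) = ⊤) :
    (∃ a : Kˣ, (Λ₂ : Set V) = (fun x => (a : K) • x) '' (Λ₁ : Set V)) ↔
    (multiplierOrder K Λ₁ = multiplierOrder K Λ₂ ∧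
      ∃ f : Λ₁ ≃ₗ[O_F] Λ₂, ∀ a ∈ multiplierOrder K Λ₁, ∀ x : Λ₁,
        ∀ h : a • (x : V) ∈ Λ₁, ((f ⟨a • (x : V), h⟩ : V) = a • ((f x : V)))) :=
  homothetic_iff_same_order_and_picard_class_general O_F F K V b Λ₁ Λ₂ h₁ h₂
end

section
/- Let O_F be a discrete valuation ring with fraction field F, K = F × F, V a free rank-one K-module, and 𝒱 the vertices of the Bruhat–Tits tree of PGL(V). Then the set 𝒱(0) of vertices whose representing lattice has multiplier order O_K = O_F × O_F is the set of classes of the lattices (O_F × p_F^d O_F)·e for d ∈ ℤ, and this set is a line (apartment) in the tree: consecutive lattices are adjacent and all members are distinct vertices. -/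
/-!
Transport everything along the `F × F`-linear isomorphism `F × F ≃ V`, `x ↦ x • e`. An
`O_F`-lattice `Λ ⊆ F × F` whose multiplier order contains the idempotents `(1, 0)` and `(0, 1)`
splits as `Λ₁ × Λ₂`, where the `Λᵢ` are nonzero fractional ideals of the DVR `O_F`, hence
`Λ = p_F^m × p_F^n`; up to the homothety by `π^m` this is `O_F × p_F^(n-m)`. Conversely the
multiplier order of `p_F^m × p_F^n` is `O_F × O_F`, and adjacency and distinctness are read off
componentwise, since `k ↦ p_F^k` is strictly decreasing.
-/

open Module Submodule

/-- The lattice `(O_F × p_F^d O_F)·e` in a free rank-one `F × F`-module, where `π` is a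
uniformizer of `O_F` and `d ∈ ℤ` (negative powers taken in `F`). -/
def apartmentLattice (O_F F : Type*) {V : Type*} [CommRing O_F] [Field F]
    [Algebra O_F F] [AddCommGroup V] [Module (F × F) V] [Module O_F V]
    (π : O_F) (d : ℤ) (e : V) : Submodule O_F V :=
  Submodule.span O_F ((fun x : F × F => x • e) ''
    {x : F × F | ∃ a b : O_F,
      x = (algebraMap O_F F a, (algebraMap O_F F π) ^ d * algebraMap O_F F b)})

open Pointwise

namespace Submodule

section Prod

variable {R M₁ M₂ : Type*} [Semiring R] [AddCommMonoid M₁] [AddCommMonoid M₂]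
  [Module R M₁] [Module R M₂]

theorem prod_inj {A A' : Submodule R M₁} {B B' : Submodule R M₂} :
    A.prod B = A'.prod B' ↔ A = A' ∧ B = B' := by
  refine ⟨fun h => ⟨?_, ?_⟩, fun ⟨hA, hB⟩ => hA ▸ hB ▸ rfl⟩
  · simpa using congrArg (map (LinearMap.fst R M₁ M₂)) h
  · simpa using congrArg (map (LinearMap.snd R M₁ M₂)) h

theorem prod_lt_prod_of_lt_left {A A' : Submodule R M₁} (h : A < A') (B : Submodule R M₂) :
    A.prod B < A'.prod B :=
  (prod_mono h.le le_rfl).lt_of_ne (by simp [prod_inj, h.ne])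

theorem prod_lt_prod_of_lt_right (A : Submodule R M₁) {B B' : Submodule R M₂} (h : B < B') :
    A.prod B < A.prod B' :=
  (prod_mono le_rfl h.le).lt_of_ne (by simp [prod_inj, h.ne])

theorem eq_prod_map_fst_map_snd {N : Submodule R (M₁ × M₂)}
    (h₁ : ∀ x ∈ N, (x.1, 0) ∈ N) (h₂ : ∀ x ∈ N, (0, x.2) ∈ N) :
    N = (N.map (LinearMap.fst R M₁ M₂)).prod (N.map (LinearMap.snd R M₁ M₂)) := by
  refine le_antisymm (fun x hx => ⟨⟨x, hx, rfl⟩, ⟨x, hx, rfl⟩⟩) ?_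
  rintro ⟨-, -⟩ ⟨⟨u, hu, rfl⟩, ⟨v, hv, rfl⟩⟩
  simpa using N.add_mem (h₁ u hu) (h₂ v hv)

theorem smul_prod {S : Type*} [Monoid S] [DistribMulAction S M₁] [DistribMulAction S M₂]
    [SMulCommClass S R M₁] [SMulCommClass S R M₂] (c : S) (A : Submodule R M₁)
    (B : Submodule R M₂) : c • A.prod B = (c • A).prod (c • B) :=
  SetLike.coe_injective <| by simp only [coe_pointwise_smul, prod_coe, Set.smul_set_prod]

end Prod

section Field

variable {R K : Type*} [CommRing R] [Field K] [Algebra R K]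

theorem smul_span_singleton_eq (c x : K) : c • span R {x} = span R {c * x} := by
  rw [smul_span, Set.smul_set_singleton, smul_eq_mul]

theorem span_eq_top_iff_ne_bot {M : Submodule R K} : span K (M : Set K) = ⊤ ↔ M ≠ ⊥ := by
  have : M = ⊥ ↔ span K (M : Set K) = ⊥ := by rw [Submodule.eq_bot_iff, span_eq_bot]; rfl
  rw [Ne, this]
  exact ⟨fun h h' => by simp_all, (Ideal.eq_bot_or_top _).resolve_left⟩

theorem span_mul_singleton_eq_of_ne_zero [IsDomain R] [Module.IsTorsionFree R K] {c x : K}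
    (hx : x ≠ 0) (h : span R {c * x} = span R {x}) (y : K) : span R {c * y} = span R {y} := by
  obtain ⟨u, hu⟩ := span_singleton_eq_span_singleton.mp h.symm
  have hc : algebraMap R K u = c := by
    rw [Units.smul_def, Algebra.smul_def] at hu
    exact mul_right_cancel₀ hx hu
  rw [← hc, ← Algebra.smul_def, ← Units.smul_def, span_singleton_group_smul_eq]

end Field

end Submodule

section MultiplierOrder

variable {R : Type*} [CommRing R]

theorem integralClosure_prod (A B : Type*) [CommRing A] [CommRing B] [Algebra R A]
    [Algebra R B] :
    integralClosure R (A × B) = (integralClosure R A).prod (integralClosure R B) := by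
  ext x
  exact IsIntegral.pair_iff

theorem multiplierOrder_prod {K₁ K₂ : Type*} [CommRing K₁] [CommRing K₂] [Algebra R K₁]
    [Algebra R K₂] (M₁ : Submodule R K₁) (M₂ : Submodule R K₂) :
    multiplierOrder (K₁ × K₂) (M₁.prod M₂) =
      (multiplierOrder K₁ M₁).prod (multiplierOrder K₂ M₂) := by
  ext ⟨a₁, a₂⟩
  rw [Subalgebra.mem_prod]
  constructor
  · intro h
    exact ⟨fun x hx => by simpa using (h (x, 0) ⟨hx, M₂.zero_mem⟩).1,
      fun y hy => by simpa using (h (0, y) ⟨M₁.zero_mem, hy⟩).2⟩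
  · rintro ⟨h₁, h₂⟩ x ⟨hx₁, hx₂⟩
    exact ⟨h₁ _ hx₁, h₂ _ hx₂⟩

theorem multiplierOrder_span_singleton {K : Type*} [Field K] [Algebra R K] {x : K}
    (hx : x ≠ 0) : multiplierOrder K (span R {x}) = ⊥ := by
  ext a
  rw [Algebra.mem_bot]
  constructor
  · intro h
    obtain ⟨r, hr⟩ := mem_span_singleton.mp (h x (mem_span_singleton_self x))
    exact ⟨r, mul_right_cancel₀ hx (by rwa [Algebra.smul_def] at hr)⟩
  · rintro ⟨r, rfl⟩ y hy
    rw [algebraMap_smul]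
    exact (span R {x}).smul_mem r hy

variable {K W V : Type*} [CommRing K] [Algebra R K]
  [AddCommGroup W] [Module K W] [Module R W] [IsScalarTower R K W]
  [AddCommGroup V] [Module K V] [Module R V] [IsScalarTower R K V]

theorem multiplierOrder_map_linearEquiv (e : W ≃ₗ[K] V) (N : Submodule R W) :
    multiplierOrder K (N.map (e.restrictScalars R : W →ₗ[R] V)) = multiplierOrder K N := by
  ext a
  change (∀ y ∈ N.map (e.restrictScalars R : W →ₗ[R] V), _) ↔ ∀ x ∈ N, a • x ∈ N
  simp [← map_smul]

end MultiplierOrder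

section RestrictScalars

variable {R K S W V : Type*} [CommRing R] [CommRing K] [CommRing S] [Algebra R K] [Algebra S K]
  [AddCommGroup W] [Module K W] [Module R W] [Module S W] [IsScalarTower R K W]
  [IsScalarTower S K W] [AddCommGroup V] [Module K V] [Module R V] [Module S V]
  [IsScalarTower R K V] [IsScalarTower S K V] (e : W ≃ₗ[K] V)

theorem span_map_restrictScalars_eq_top_iff (N : Submodule R W) :
    span S (N.map (e.restrictScalars R : W →ₗ[R] V) : Set V) = ⊤ ↔
      span S (N : Set W) = ⊤ := by
  rw [map_coe,
    show ⇑(e.restrictScalars R : W →ₗ[R] V) = (e.restrictScalars S : W →ₗ[S] V) from rfl,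
    span_image (e.restrictScalars S : W →ₗ[S] V), Submodule.map_eq_top_iff]

theorem map_restrictScalars_pointwise_smul [SMulCommClass S R W] [SMulCommClass S R V] (c : S)
    (N : Submodule R W) :
    (c • N).map (e.restrictScalars R : W →ₗ[R] V) =
      c • N.map (e.restrictScalars R : W →ₗ[R] V) :=
  SetLike.coe_injective <| by
    simp only [map_coe, coe_pointwise_smul]
    exact Set.image_smul_comm _ _ _ fun x => (e.restrictScalars S).map_smul c x

theorem coe_map_restrictScalars_eq_image_smul_iff [SMulCommClass S R W] [SMulCommClass S R V]
    (c : S) (N P : Submodule R W) :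
    (N.map (e.restrictScalars R : W →ₗ[R] V) : Set V) =
        (fun x => c • x) '' P.map (e.restrictScalars R : W →ₗ[R] V) ↔ N = c • P := by
  rw [Set.image_smul, ← coe_pointwise_smul, SetLike.coe_set_eq,
    ← map_restrictScalars_pointwise_smul,
    (map_injective_of_injective (f := (e.restrictScalars R : W →ₗ[R] V)) e.injective).eq_iff]

end RestrictScalars

section FractionField

variable {O_F : Type*} (F : Type*) [CommRing O_F] [Field F] [Algebra O_F F]

/-- `zpowSpan F π k` is the fractional ideal `p_F^k`, and `zpowLattice F π m n` is the lattice
`p_F^m × p_F^n` in `F × F`. -/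
def zpowSpan (π : O_F) (k : ℤ) : Submodule O_F F :=
  span O_F {algebraMap O_F F π ^ k}

def zpowLattice (π : O_F) (m n : ℤ) : Submodule O_F (F × F) :=
  (zpowSpan F π m).prod (zpowSpan F π n)

variable [IsFractionRing O_F F] {F} {π : O_F}

theorem algebraMap_ne_zero_of_irreducible (hπ : Irreducible π) : algebraMap O_F F π ≠ 0 := by
  simpa using hπ.ne_zero

theorem zpowSpan_ne_bot (hπ : Irreducible π) (k : ℤ) : zpowSpan F π k ≠ ⊥ := by
  simpa [zpowSpan] using zpow_ne_zero k (algebraMap_ne_zero_of_irreducible hπ)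

theorem smul_zpowSpan (hπ : Irreducible π) (j k : ℤ) :
    (algebraMap O_F F π ^ j) • zpowSpan F π k = zpowSpan F π (j + k) := by
  rw [zpowSpan, smul_span_singleton_eq, ← zpow_add₀ (algebraMap_ne_zero_of_irreducible hπ),
    zpowSpan]

theorem uniformizer_smul_zpowSpan (hπ : Irreducible π) (k : ℤ) :
    π • zpowSpan F π k = zpowSpan F π (k + 1) := by
  rw [add_comm, ← smul_zpowSpan hπ, zpow_one, zpowSpan, smul_span, smul_span]
  simp [Algebra.smul_def]

variable [IsDomain O_F] [IsDiscreteValuationRing O_F]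

theorem zpowSpan_injective (hπ : Irreducible π) : Function.Injective (zpowSpan F π) := by
  intro k l h
  wlog hkl : k ≤ l generalizing k l
  · exact (this h.symm (le_of_not_ge hkl)).symm
  obtain ⟨n, rfl⟩ := Int.le.dest hkl
  obtain ⟨u, hu⟩ := span_singleton_eq_span_singleton.mp h
  have hu' : algebraMap O_F F u = algebraMap O_F F (π ^ n) := by
    rw [Units.smul_def, Algebra.smul_def, zpow_add₀ (algebraMap_ne_zero_of_irreducible hπ),
      zpow_natCast, mul_comm (_ ^ k)] at hu
    simpa using mul_right_cancel₀ (zpow_ne_zero k (algebraMap_ne_zero_of_irreducible hπ)) hu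
  have := IsDiscreteValuationRing.unit_mul_pow_congr_pow hπ hπ u 1 0 n
    (by simpa using IsFractionRing.injective O_F F hu')
  simp [← this]

theorem zpowSpan_succ_lt (hπ : Irreducible π) (k : ℤ) :
    zpowSpan F π (k + 1) < zpowSpan F π k := by
  refine lt_of_le_of_ne ?_ ((zpowSpan_injective hπ).ne (by omega))
  rw [← uniformizer_smul_zpowSpan hπ]
  exact smul_le_self_of_tower π _

theorem exists_eq_zpowSpan (hπ : Irreducible π) {M : Submodule O_F F} (hfg : M.FG)
    (hM : M ≠ ⊥) : ∃ k, M = zpowSpan F π k := by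
  obtain ⟨x, rfl⟩ :=
    (FractionalIdeal.isPrincipal ⟨M, FractionalIdeal.isFractional_of_fg hfg⟩).principal
  obtain ⟨k, u, rfl⟩ :=
    IsDiscreteValuationRing.exists_units_eq_smul_zpow_of_irreducible hπ (by simpa using hM)
  exact ⟨k, span_singleton_group_smul_eq O_F u _⟩

end FractionField

section Lattice

variable {O_F F : Type*} [CommRing O_F] [Field F] [Algebra O_F F] {π : O_F}

theorem zpowLattice_fg (m n : ℤ) : (zpowLattice F π m n).FG :=
  (fg_span_singleton _).prod (fg_span_singleton _)

theorem apartmentLattice_eq_map {V : Type*} [AddCommGroup V] [Module (F × F) V] [Module O_F V]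
    [IsScalarTower O_F (F × F) V] (e : (F × F) ≃ₗ[F × F] V) (d : ℤ) :
    apartmentLattice O_F F π d (e 1) =
      (zpowLattice F π 0 d).map (e.restrictScalars O_F : (F × F) →ₗ[O_F] V) := by
  have hS : {x : F × F | ∃ a b : O_F,
      x = (algebraMap O_F F a, algebraMap O_F F π ^ d * algebraMap O_F F b)} =
      (zpowLattice F π 0 d : Set (F × F)) := by
    ext ⟨x, y⟩
    simp [zpowLattice, zpowSpan, mem_span_singleton, Algebra.smul_def, eq_comm, mul_comm]
  have he : (fun x : F × F => x • e 1) = (e.restrictScalars O_F : (F × F) →ₗ[O_F] V) := by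
    ext x
    simp [← map_smul]
  rw [apartmentLattice, hS, he, span_image, span_eq]

variable [IsFractionRing O_F F]

theorem span_zpowLattice (hπ : Irreducible π) (m n : ℤ) :
    span F (zpowLattice F π m n : Set (F × F)) = ⊤ := by
  rw [zpowLattice, prod_coe, span_prod_eq F (zero_mem _) (zero_mem _), prod_eq_top_iff,
    span_eq_top_iff_ne_bot, span_eq_top_iff_ne_bot]
  exact ⟨zpowSpan_ne_bot hπ m, zpowSpan_ne_bot hπ n⟩

theorem zpowLattice_eq_smul (hπ : Irreducible π) (m n : ℤ) :
    zpowLattice F π m n = (algebraMap O_F F π ^ m) • zpowLattice F π 0 (n - m) := by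
  rw [zpowLattice, zpowLattice, smul_prod, smul_zpowSpan hπ, smul_zpowSpan hπ, add_zero,
    add_sub_cancel]

variable [IsDomain O_F] [IsDiscreteValuationRing O_F]

theorem multiplierOrder_zpowLattice (hπ : Irreducible π) (m n : ℤ) :
    multiplierOrder (F × F) (zpowLattice F π m n) = integralClosure O_F (F × F) := by
  have hx (k : ℤ) : algebraMap O_F F π ^ k ≠ 0 :=
    zpow_ne_zero k (algebraMap_ne_zero_of_irreducible hπ)
  rw [zpowLattice, multiplierOrder_prod, zpowSpan, zpowSpan,
    multiplierOrder_span_singleton (hx m), multiplierOrder_span_singleton (hx n),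
    integralClosure_prod, IsIntegrallyClosed.integralClosure_eq_bot]

theorem eq_zpowLattice_of_multiplierOrder_eq (hπ : Irreducible π) {N : Submodule O_F (F × F)}
    (hfg : N.FG) (hspan : span F (N : Set (F × F)) = ⊤)
    (hN : multiplierOrder (F × F) N = integralClosure O_F (F × F)) :
    ∃ m n, N = zpowLattice F π m n := by
  have hmem {a b : F} (ha : a ∈ (⊥ : Subalgebra O_F F)) (hb : b ∈ (⊥ : Subalgebra O_F F)) :
      (a, b) ∈ multiplierOrder (F × F) N := by
    rw [hN, integralClosure_prod, IsIntegrallyClosed.integralClosure_eq_bot]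
    exact ⟨ha, hb⟩
  have hsplit := eq_prod_map_fst_map_snd
    (fun x hx => by simpa [Prod.mul_def] using hmem (one_mem _) (zero_mem _) x hx)
    (fun x hx => by simpa [Prod.mul_def] using hmem (zero_mem _) (one_mem _) x hx)
  rw [hsplit, prod_coe, span_prod_eq F (zero_mem _) (zero_mem _), prod_eq_top_iff,
    span_eq_top_iff_ne_bot, span_eq_top_iff_ne_bot] at hspan
  obtain ⟨m, hm⟩ := exists_eq_zpowSpan hπ (hfg.map _) hspan.1
  obtain ⟨n, hn⟩ := exists_eq_zpowSpan hπ (hfg.map _) hspan.2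
  exact ⟨m, n, by rw [hsplit, hm, hn, zpowLattice]⟩

theorem maximalIdeal_smul_zpowLattice (hπ : Irreducible π) (m n : ℤ) :
    IsLocalRing.maximalIdeal O_F • zpowLattice F π m n = zpowLattice F π (m + 1) (n + 1) := by
  rw [(IsDiscreteValuationRing.irreducible_iff_uniformizer π).mp hπ, ideal_span_singleton_smul,
    zpowLattice, smul_prod, uniformizer_smul_zpowSpan hπ, uniformizer_smul_zpowSpan hπ,
    zpowLattice]

theorem eq_of_smul_zpowLattice_eq (hπ : Irreducible π) {c : F} {d d' : ℤ}
    (h : c • zpowLattice F π 0 d = zpowLattice F π 0 d') : d = d' := by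
  simp only [zpowLattice, smul_prod, prod_inj, zpowSpan, smul_span_singleton_eq] at h
  have hπ0 := algebraMap_ne_zero_of_irreducible (F := F) hπ
  have := span_mul_singleton_eq_of_ne_zero (zpow_ne_zero 0 hπ0) h.1 (algebraMap O_F F π ^ d)
  exact zpowSpan_injective hπ (this.symm.trans h.2)

end Lattice

/-- for `K = F × F`, the vertices of the Bruhat–Tits tree with maximal
multiplier order `O_K = O_F × O_F` are exactly the classes of the lattices
`(O_F × p_F^d O_F)·e`, `d ∈ ℤ`, and these form a line (apartment): consecutive ones
are adjacent and all of them are pairwise non-homothetic. -/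
theorem vertexSetZero_split
    (O_F F V : Type*) [CommRing O_F] [IsDomain O_F] [IsDiscreteValuationRing O_F]
    [Field F] [Algebra O_F F] [IsFractionRing O_F F]
    [AddCommGroup V] [Module (F × F) V] [Module F V] [IsScalarTower F (F × F) V]
    [Module O_F V] [IsScalarTower O_F (F × F) V] [IsScalarTower O_F F V]
    (b : Basis (Fin 1) (F × F) V)
    (π : O_F) (hπ : Irreducible π) :
    -- each `(O_F × p_F^d O_F)·e` is a full lattice with multiplier order `O_F × O_F` ...
    (∀ d : ℤ, (apartmentLattice O_F F π d (b 0) : Submodule O_F V).FG ∧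
      Submodule.span F ((apartmentLattice O_F F π d (b 0) : Submodule O_F V) : Set V) = ⊤ ∧
      multiplierOrder (F × F) (apartmentLattice O_F F π d (b 0)) =
        integralClosure O_F (F × F)) ∧
    -- ... every full lattice with multiplier order `O_F × O_F` is `F^×`-homothetic to
    -- one of them ...
    (∀ Λ : Submodule O_F V, Λ.FG → Submodule.span F (Λ : Set V) = ⊤ →
      multiplierOrder (F × F) Λ = integralClosure O_F (F × F) →
      ∃ (c : Fˣ) (d : ℤ), (Λ : Set V) = (fun x => (c : F) • x) ''
        ((apartmentLattice O_F F π d (b 0) : Submodule O_F V) : Set V)) ∧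
    -- ... consecutive lattices are adjacent vertices ...
    (∀ d : ℤ,
      (IsLocalRing.maximalIdeal O_F) • (apartmentLattice O_F F π d (b 0) : Submodule O_F V) <
        apartmentLattice O_F F π (d + 1) (b 0) ∧
      (apartmentLattice O_F F π (d + 1) (b 0) : Submodule O_F V) <
        apartmentLattice O_F F π d (b 0)) ∧
    -- ... and distinct `d` give distinct vertices.
    (∀ d d' : ℤ,
      (∃ c : Fˣ, ((apartmentLattice O_F F π d' (b 0) : Submodule O_F V) : Set V) =
        (fun x => (c : F) • x) ''
          ((apartmentLattice O_F F π d (b 0) : Submodule O_F V) : Set V)) → d = d') := by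
  let e : (F × F) ≃ₗ[F × F] V :=
    (b.equivFun.trans (LinearEquiv.funUnique (Fin 1) (F × F) (F × F))).symm
  let Φ := orderIsoMapComap (e.restrictScalars O_F)
  have hL (d : ℤ) : apartmentLattice O_F F π d (b 0) = Φ (zpowLattice F π 0 d) := by
    rw [show b 0 = e 1 by simp [e]]
    exact apartmentLattice_eq_map e d
  refine ⟨fun d => ?_, fun Λ hfg hspan hmult => ?_, fun d => ?_, fun d d' ⟨c, hc⟩ => ?_⟩
  · rw [hL]
    exact ⟨(zpowLattice_fg 0 d).map _,
      (span_map_restrictScalars_eq_top_iff e _).mpr (span_zpowLattice hπ 0 d),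
      (multiplierOrder_map_linearEquiv e _).trans (multiplierOrder_zpowLattice hπ 0 d)⟩
  · obtain ⟨N, rfl⟩ := Φ.surjective Λ
    obtain ⟨m, n, rfl⟩ := eq_zpowLattice_of_multiplierOrder_eq hπ
      (fg_of_fg_map_injective (e.restrictScalars O_F : (F × F) →ₗ[O_F] V) e.injective hfg)
      ((span_map_restrictScalars_eq_top_iff e N).mp hspan)
      ((multiplierOrder_map_linearEquiv e N).symm.trans hmult)
    refine ⟨Units.mk0 _ (zpow_ne_zero m (algebraMap_ne_zero_of_irreducible hπ)), n - m, ?_⟩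
    rw [hL]
    exact (coe_map_restrictScalars_eq_image_smul_iff e _ _ _).mpr (zpowLattice_eq_smul hπ m n)
  · have hI : IsLocalRing.maximalIdeal O_F • Φ (zpowLattice F π 0 d) =
        Φ (zpowLattice F π (0 + 1) (d + 1)) := by
      rw [← maximalIdeal_smul_zpowLattice hπ]
      exact (map_smul'' _ _ _).symm
    rw [hL, hL, hI, Φ.lt_iff_lt, Φ.lt_iff_lt]
    exact ⟨prod_lt_prod_of_lt_left (zpowSpan_succ_lt hπ 0) _,
      prod_lt_prod_of_lt_right _ (zpowSpan_succ_lt hπ d)⟩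
  · rw [hL, hL] at hc
    exact (eq_of_smul_zpowLattice_eq hπ
      ((coe_map_restrictScalars_eq_image_smul_iff e _ _ _).mp hc).symm)
end

section
/- Let O_F be a discrete valuation ring, K a quadratic étale F-algebra, V a free rank-one K-module, and 𝒱 the Bruhat–Tits tree vertex set. Then for each k ∈ ℕ the fibers 𝒱(k) = {v : n(v) = k} are precisely the orbits of the action of K^× on 𝒱 (acting via K^× ⊆ GL_F(V)); i.e., K^× acts transitively on each 𝒱(k), and distinct k give distinct orbits. -/
open Module Submodule

/-- The submodule `O_F + p_F^n · O_K` of `K`: the order of conductor `p_F^n`. -/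
def conductorOrderSubmodule (O_F K : Type*) [CommRing O_F] [IsLocalRing O_F]
    [CommRing K] [Algebra O_F K] (n : ℕ) : Submodule O_F K :=
  (1 : Submodule O_F K) ⊔
    ((IsLocalRing.maximalIdeal O_F) ^ n) • (Subalgebra.toSubmodule (integralClosure O_F K))

/-!
Transporting along `V ≃ K`, it suffices to show that every lattice `Λ` in the quadratic algebra `K`
is `K^×`-homothetic to its multiplier order. Up to a scalar in `F^×`, `Λ = O_F + O_F z`. Writing
`z² = c + d z` and clearing denominators of `(1, c, d)` to a primitive triple `(r, s, t)` over
`O_F`, the module `R = O_F + O_F r z` is a ring, and for one of `(a, b) = (1, 0), (0, 1), (1, 1)`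
the value `r a² + t a b - s b²` is a unit, which makes `x = a + b z` satisfy `x R = Λ`. Hence
`O(Λ) = R` and `Λ = x O(Λ)`, so lattices with the same multiplier order are homothetic.
Conversely, distinct exponents give distinct orders by Nakayama: `O_F + p^k O_K = O_F + p^(k+1) O_K`
would force `p^k O_K ⊆ O_F`, so the order would not span `K`.
-/

open scoped Pointwise

section MultiplierOrder

variable {O_F K V : Type*} [CommRing O_F] [CommRing K] [Algebra O_F K]
  [AddCommGroup V] [Module K V] [Module O_F V] [IsScalarTower O_F K V]

lemma mem_multiplierOrder_iff {Λ : Submodule O_F V} {a : K} :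
    a ∈ multiplierOrder K Λ ↔ ∀ x ∈ Λ, a • x ∈ Λ := Iff.rfl

lemma multiplierOrder_map_linearEquiv_s10 {W : Type*} [AddCommGroup W] [Module K W] [Module O_F W]
    [IsScalarTower O_F K W] (e : V ≃ₗ[K] W) (Λ : Submodule O_F V) :
    multiplierOrder K (Λ.map ((e : V →ₗ[K] W).restrictScalars O_F)) = multiplierOrder K Λ := by
  ext a
  simp only [mem_multiplierOrder_iff, mem_map, forall_exists_index, and_imp,
    forall_apply_eq_imp_iff₂, LinearMap.coe_restrictScalars, LinearEquiv.coe_coe, ← map_smul,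
    e.injective.eq_iff, exists_eq_right]

lemma multiplierOrder_units_smul (a : Kˣ) (Λ : Submodule O_F V) :
    multiplierOrder K (a • Λ) = multiplierOrder K Λ :=
  multiplierOrder_map_linearEquiv_s10 (LinearEquiv.smulOfUnit a) Λ

lemma toSubmodule_multiplierOrder_of_mul_le {N : Submodule O_F K} (h1 : (1 : K) ∈ N)
    (hN : N * N ≤ N) : Subalgebra.toSubmodule (multiplierOrder K N) = N :=
  le_antisymm (fun a ha => by simpa using ha 1 h1) fun a ha x hx => hN (mul_mem_mul ha hx)

lemma toSubmodule_multiplierOrder_span_one_pair {w : K} (hw : w * w ∈ span O_F {1, w}) :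
    Subalgebra.toSubmodule (multiplierOrder K (span O_F {1, w})) = span O_F {1, w} := by
  have h1 : (1 : K) ∈ span O_F {1, w} := subset_span (Set.mem_insert _ _)
  have hw1 : w ∈ span O_F {1, w} := subset_span (Set.mem_insert_of_mem _ rfl)
  refine toSubmodule_multiplierOrder_of_mul_le h1 ?_
  rw [span_mul_span, span_le]
  rintro _ ⟨a, ha, b, hb, rfl⟩
  simp only [Set.mem_insert_iff, Set.mem_singleton_iff] at ha hb
  rcases ha with rfl | rfl <;> rcases hb with rfl | rfl
  · simpa only [mul_one, SetLike.mem_coe] using h1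
  · simpa only [one_mul, SetLike.mem_coe] using hw1
  · simpa only [mul_one, SetLike.mem_coe] using hw1
  · exact hw

lemma map_units_smul {W : Type*} [AddCommGroup W] [Module K W] [Module O_F W]
    [IsScalarTower O_F K W] (f : V →ₗ[K] W) (a : Kˣ) (Λ : Submodule O_F V) :
    (a • Λ).map (f.restrictScalars O_F) = a • Λ.map (f.restrictScalars O_F) := by
  refine SetLike.coe_injective ?_
  simp only [map_coe]
  exact Set.image_smul_comm _ _ _ fun x => map_smul f (a : K) x

end MultiplierOrder

section IsLattice

variable {O_F F K V : Type*} [CommRing O_F] [Field F] [Algebra O_F F] [CommRing K] [Algebra F K]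
  [Algebra O_F K] [AddCommGroup V] [Module K V] [Module F V]
  [IsScalarTower F K V] [Module O_F V] [IsScalarTower O_F K V] [IsScalarTower O_F F V]

lemma Submodule.IsLattice.map_linearEquiv {W : Type*} [AddCommGroup W] [Module K W] [Module F W]
    [IsScalarTower F K W] [Module O_F W] [IsScalarTower O_F K W] [IsScalarTower O_F F W]
    (e : V ≃ₗ[K] W) (Λ : Submodule O_F V) [Λ.IsLattice F] :
    (Λ.map ((e : V →ₗ[K] W).restrictScalars O_F)).IsLattice F where
  fg := IsLattice.fg.map _
  span_eq_top := by
    have he : ⇑((e : V →ₗ[K] W).restrictScalars O_F) = (e : V →ₗ[K] W).restrictScalars F := rfl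
    rw [map_coe, he, span_image, IsLattice.span_eq_top, map_top, LinearMap.range_eq_top]
    exact e.surjective

lemma isLattice_units_smul (a : Kˣ) (Λ : Submodule O_F V) [Λ.IsLattice F] :
    (a • Λ).IsLattice F :=
  IsLattice.map_linearEquiv (LinearEquiv.smulOfUnit a) Λ

end IsLattice

lemma Submodule.span_pair_eq_of_isUnit_det {R M : Type*} [CommRing R] [AddCommGroup M]
    [Module R M] (x y : M) {a b c d : R} (h : IsUnit (a * d - b * c)) :
    span R {a • x + b • y, c • x + d • y} = span R {x, y} := by
  obtain ⟨u, hu⟩ := h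
  have hu' : (↑u⁻¹ : R) * (a * d - b * c) = 1 := by rw [← hu, Units.inv_mul]
  refine le_antisymm (span_le.mpr ?_) (span_le.mpr ?_) <;>
    simp only [Set.insert_subset_iff, Set.singleton_subset_iff, SetLike.mem_coe, mem_span_pair]
  · exact ⟨⟨a, b, rfl⟩, ⟨c, d, rfl⟩⟩
  · refine ⟨⟨↑u⁻¹ * d, -(↑u⁻¹ * b), ?_⟩, ⟨-(↑u⁻¹ * c), ↑u⁻¹ * a, ?_⟩⟩
    · linear_combination (norm := module) hu' • x
    · linear_combination (norm := module) hu' • y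

lemma isUnit_of_span_smul_eq_top {F A : Type*} [Field F] [CommRing A] [Algebra F A] {x : A}
    {s : Set A} (h : span F (x • s) = ⊤) : IsUnit x := by
  have hle : span F (x • s) ≤ (Ideal.span {x}).restrictScalars F := by
    rw [span_le]
    rintro _ ⟨y, -, rfl⟩
    exact Ideal.mem_span_singleton'.mpr ⟨y, mul_comm y x⟩
  rwa [h, top_le_iff, restrictScalars_eq_top_iff, Ideal.span_singleton_eq_top] at hle

/-- For `x = a + b z`, the determinant of `(x, x r z)` in the coordinates `(1, z)` is
`r a² + t a b - s b²`; as `(r, s, t)` is primitive, it is a unit at one of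
`(a, b) = (1, 0), (0, 1), (1, 1)`. -/
lemma exists_span_pair_mul_eq_span_one_pair {R A : Type*} [CommRing R] [IsLocalRing R]
    [CommRing A] [Algebra R A] {z : A} {r s t : R} (hz : z * (r • z) = s • 1 + t • z)
    (hrst : IsUnit r ∨ IsUnit s ∨ IsUnit t) :
    ∃ x : A, span R {x, x * (r • z)} = span R {1, z} := by
  have key : ∀ a b : R, IsUnit (a * (a * r + b * t) - b * (b * s)) →
      span R {a • 1 + b • z, (a • 1 + b • z) * (r • z)} = span R {1, z} := by
    intro a b hab
    have hx : (a • 1 + b • z) * (r • z) = (b * s) • 1 + (a * r + b * t) • z := by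
      rw [add_mul, smul_mul_assoc, smul_mul_assoc, one_mul, hz]
      module
    rw [hx]
    exact span_pair_eq_of_isUnit_det 1 z hab
  by_cases hr : IsUnit r
  · exact ⟨_, key 1 0 (by simpa using hr)⟩
  by_cases hs : IsUnit s
  · exact ⟨_, key 0 1 (by simpa using hs.neg)⟩
  have ht : IsUnit t := by tauto
  refine ⟨_, key 1 1 ?_⟩
  by_contra h
  have hsr : s - r ∈ nonunits R := by
    rw [sub_eq_add_neg]
    exact IsLocalRing.nonunits_add hs (by rwa [mem_nonunits_iff, IsUnit.neg_iff])
  refine IsLocalRing.nonunits_add (by simpa using h) hsr ?_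
  simpa using ht

lemma span_ne_top_of_le_span_singleton {O_F F V : Type*} [CommRing O_F] [Field F] [Algebra O_F F]
    [AddCommGroup V] [Module F V] [Module O_F V] [IsScalarTower O_F F V]
    (hV : 1 < finrank F V) {N : Submodule O_F V} {v : V} (h : N ≤ span O_F {v}) :
    span F (N : Set V) ≠ ⊤ := by
  intro htop
  have hv : span F {v} = ⊤ := by
    rw [eq_top_iff, ← htop, ← span_span_of_tower O_F F {v}]
    exact span_mono h
  have : finrank F V ≤ 1 := by
    rw [← finrank_top F V, ← hv]
    simpa using finrank_span_le_card (R := F) ({v} : Set V)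
  omega

lemma exists_ker_eq_range_algebraMap {F K : Type*} [Field F] [CommRing K] [Algebra F K]
    (hK : finrank F K = 2) :
    ∃ ψ : K →ₗ[F] F, LinearMap.ker ψ = LinearMap.range (Algebra.linearMap F K) := by
  have : Nontrivial K := Module.nontrivial_of_finrank_eq_succ hK
  have : Module.Finite F K := Module.finite_of_finrank_pos (by omega)
  set W := LinearMap.range (Algebra.linearMap F K)
  have hW : finrank F W = 1 := by
    rw [LinearMap.finrank_range_of_inj (algebraMap F K).injective, finrank_self]
  have hQ : finrank F (K ⧸ W) = finrank F F := by
    have := W.finrank_quotient_add_finrank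
    rw [finrank_self]
    omega
  exact ⟨(LinearEquiv.ofFinrankEq _ _ hQ).toLinearMap ∘ₗ W.mkQ, by
    rw [LinearEquiv.ker_comp, ker_mkQ]⟩

section PrincipalIdealRing

variable {O_F F : Type*} [CommRing O_F] [IsDomain O_F] [IsPrincipalIdealRing O_F] [Field F]
  [Algebra O_F F] [IsFractionRing O_F F]

lemma Submodule.FG.exists_eq_span_singleton {S : Submodule O_F F} (hS : S.FG) :
    ∃ c, S = span O_F {c} :=
  (FractionalIdeal.isPrincipal ⟨S, FractionalIdeal.isFractional_of_fg hS⟩).principal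

/-- With `O_F (1, c, d) = O_F g`, take `r = g⁻¹`. -/
lemma exists_primitive_multiple [IsLocalRing O_F] (c d : F) :
    ∃ r s t : O_F, (IsUnit r ∨ IsUnit s ∨ IsUnit t) ∧
      algebraMap O_F F s = r • c ∧ algebraMap O_F F t = r • d := by
  obtain ⟨g, hg⟩ := (fg_span (Set.toFinite {1, c, d})).exists_eq_span_singleton (O_F := O_F)
  have hmul : ∀ x ∈ ({1, c, d} : Set F), ∃ a : O_F, algebraMap O_F F a * g = x := fun x hx => by
    obtain ⟨a, ha⟩ := mem_span_singleton.mp (hg ▸ subset_span hx)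
    exact ⟨a, by rw [← ha, Algebra.smul_def]⟩
  obtain ⟨r, hr⟩ := hmul 1 (by simp)
  obtain ⟨s, hs⟩ := hmul c (by simp)
  obtain ⟨t, ht⟩ := hmul d (by simp)
  obtain ⟨α, _, hcd, hαβγ⟩ :=
    mem_span_insert.mp (hg ▸ mem_span_singleton_self g : g ∈ span O_F {1, c, d})
  obtain ⟨β, γ, rfl⟩ := mem_span_pair.mp hcd
  have hg0 : g ≠ 0 := by rintro rfl; simp at hr
  have hcomb : α * r + β * s + γ * t = 1 := by
    apply IsFractionRing.injective O_F F
    apply mul_right_cancel₀ hg0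
    rw [map_one, one_mul]
    nth_rewrite 2 [hαβγ]
    simp only [Algebra.smul_def, map_add, map_mul, ← hr, ← hs, ← ht]
    ring
  refine ⟨r, s, t, ?_, ?_, ?_⟩
  · by_contra! h
    simp only [← mem_nonunits_iff, ← IsLocalRing.mem_maximalIdeal] at h
    refine (IsLocalRing.maximalIdeal.isMaximal O_F).ne_top ((Ideal.eq_top_iff_one _).mpr ?_)
    rw [← hcomb]
    exact add_mem (add_mem (Ideal.mul_mem_left _ _ h.1) (Ideal.mul_mem_left _ _ h.2.1))
      (Ideal.mul_mem_left _ _ h.2.2)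
  · rw [← hs, Algebra.smul_def]; linear_combination (-algebraMap O_F F s) * hr
  · rw [← ht, Algebra.smul_def]; linear_combination (-algebraMap O_F F t) * hr

lemma exists_eq_inf_ker_sup_span_singleton {V : Type*} [AddCommGroup V] [Module F V]
    [Module O_F V] [IsScalarTower O_F F V] (ψ : V →ₗ[F] F) {Λ : Submodule O_F V} (hΛ : Λ.FG) :
    ∃ z ∈ Λ, Λ = Λ ⊓ (LinearMap.ker ψ).restrictScalars O_F ⊔ span O_F {z} := by
  obtain ⟨t, ht⟩ := (hΛ.map (ψ.restrictScalars O_F)).exists_eq_span_singleton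
  obtain ⟨z, hzΛ, rfl⟩ : t ∈ Λ.map (ψ.restrictScalars O_F) := ht ▸ mem_span_singleton_self t
  refine ⟨z, hzΛ, le_antisymm (fun y hy => ?_) (sup_le inf_le_left (span_le.mpr ?_))⟩
  · obtain ⟨a, ha⟩ := mem_span_singleton.mp (ht ▸ mem_map_of_mem hy)
    refine mem_sup.mpr ⟨y - a • z, ⟨sub_mem hy (Λ.smul_mem a hzΛ), ?_⟩, a • z,
      smul_mem _ a (mem_span_singleton_self z), sub_add_cancel y _⟩
    have hψ : ψ (a • z) = ψ y := by rw [LinearMap.map_smul_of_tower]; exact ha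
    rw [SetLike.mem_coe, restrictScalars_mem, LinearMap.mem_ker, map_sub, hψ, sub_self]
  · simpa using hzΛ

variable {K : Type*} [CommRing K] [Algebra F K] [Algebra O_F K] [IsScalarTower O_F F K]

lemma exists_inf_range_algebraMap_eq_span [Nontrivial K] {Λ : Submodule O_F K} (hΛ : Λ.FG) :
    ∃ c : F, Λ ⊓ (LinearMap.range (Algebra.linearMap F K)).restrictScalars O_F =
      span O_F {algebraMap F K c} := by
  set f := (Algebra.linearMap F K).restrictScalars O_F
  have hS : (Λ.comap f).FG :=
    fg_of_fg_map_injective f (algebraMap F K).injective (hΛ.of_le (map_comap_le f Λ))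
  obtain ⟨c, hc⟩ := hS.exists_eq_span_singleton
  refine ⟨c, ?_⟩
  rw [← LinearMap.range_restrictScalars, inf_comm, ← map_comap_eq, hc, map_span,
    Set.image_singleton]
  rfl

lemma exists_eq_units_smul_span_one_pair (hK : finrank F K = 2) (Λ : Submodule O_F K)
    [Λ.IsLattice F] : ∃ (u : Kˣ) (z : K), Λ = u • span O_F {1, z} := by
  have : Nontrivial K := Module.nontrivial_of_finrank_eq_succ hK
  obtain ⟨ψ, hψ⟩ := exists_ker_eq_range_algebraMap hK
  obtain ⟨z, -, hΛ⟩ := exists_eq_inf_ker_sup_span_singleton ψ (IsLattice.fg (A := F) (M := Λ))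
  obtain ⟨c, hc⟩ := exists_inf_range_algebraMap_eq_span (F := F) (IsLattice.fg (M := Λ))
  rw [hψ, hc, ← span_insert] at hΛ
  have hc0 : c ≠ 0 := by
    rintro rfl
    rw [map_zero, span_insert_zero] at hΛ
    exact span_ne_top_of_le_span_singleton (hK ▸ one_lt_two) hΛ.le IsLattice.span_eq_top
  let u : Kˣ := Units.map (algebraMap F K) (Units.mk0 c hc0)
  refine ⟨u, ↑u⁻¹ * z, ?_⟩
  rw [Units.smul_def, smul_span, Set.smul_set_insert, Set.smul_set_singleton, smul_eq_mul,
    smul_eq_mul, mul_one, Units.mul_inv_cancel_left, hΛ]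
  rfl

theorem exists_units_smul_multiplierOrder_eq [IsLocalRing O_F] (hK : finrank F K = 2)
    (Λ : Submodule O_F K) [Λ.IsLattice F] :
    ∃ x : Kˣ, x • Subalgebra.toSubmodule (multiplierOrder K Λ) = Λ := by
  obtain ⟨u, z, rfl⟩ := exists_eq_units_smul_span_one_pair hK Λ
  set J := span O_F {1, z}
  have : J.IsLattice F := by simpa using isLattice_units_smul u⁻¹ (u • J)
  obtain ⟨c, d, hcd⟩ : ∃ c d : F, c • 1 + d • z = z * z := by
    rw [← mem_span_pair, ← span_span_of_tower O_F F, IsLattice.span_eq_top]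
    trivial
  obtain ⟨r, s, t, hrst, hs, ht⟩ := exists_primitive_multiple (O_F := O_F) c d
  have hz : z * (r • z) = s • 1 + t • z := by
    rw [mul_smul_comm, ← hcd, smul_add, ← smul_assoc, ← smul_assoc, ← hs, ← ht,
      algebraMap_smul, algebraMap_smul]
  obtain ⟨x, hx⟩ := exists_span_pair_mul_eq_span_one_pair hz hrst
  have hxJ : x • span O_F {1, r • z} = J := by
    rw [smul_span, Set.smul_set_insert, Set.smul_set_singleton, smul_eq_mul, smul_eq_mul, mul_one,
      hx]
  obtain ⟨X, rfl⟩ : IsUnit x := isUnit_of_span_smul_eq_top (s := {1, r • z}) (F := F) <| by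
    rw [← span_span_of_tower O_F F, ← smul_span, hxJ, IsLattice.span_eq_top]
  have hw : (r • z) * (r • z) ∈ span O_F {1, r • z} := by
    rw [smul_mul_assoc, hz, smul_add, smul_smul, smul_comm r t]
    exact mem_span_pair.mpr ⟨r * s, t, rfl⟩
  refine ⟨u * X, ?_⟩
  rw [multiplierOrder_units_smul, ← hxJ, ← Units.smul_def, multiplierOrder_units_smul,
    toSubmodule_multiplierOrder_span_one_pair hw, mul_smul]

end PrincipalIdealRing

section Conductor

variable {O_F K : Type*} [CommRing O_F] [IsLocalRing O_F] [CommRing K] [Algebra O_F K]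

lemma conductorOrderSubmodule_antitone : Antitone (conductorOrderSubmodule O_F K) :=
  fun _ _ h => sup_le_sup_left (smul_mono_left (Ideal.pow_le_pow_right h)) _

variable {F : Type*} [Field F] [Algebra O_F F] [Algebra F K] [IsScalarTower O_F F K]
  [IsNoetherianRing O_F]

lemma conductorOrderSubmodule_succ_ne (hK : 1 < finrank F K) (k : ℕ)
    [hk : (conductorOrderSubmodule O_F K k).IsLattice F] :
    conductorOrderSubmodule O_F K (k + 1) ≠ conductorOrderSubmodule O_F K k := by
  intro h
  set m := IsLocalRing.maximalIdeal O_F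
  set N := m ^ k • Subalgebra.toSubmodule (integralClosure O_F K)
  have hN : N ≤ 1 := by
    refine le_of_le_smul_of_le_jacobson_bot (hk.fg.of_le le_sup_right)
      (IsLocalRing.maximalIdeal_le_jacobson _) ?_
    calc N ≤ conductorOrderSubmodule O_F K k := le_sup_right
      _ = 1 ⊔ m • N := by rw [← h, conductorOrderSubmodule, pow_succ', Submodule.mul_smul]
  refine span_ne_top_of_le_span_singleton hK (v := (1 : K)) ?_ hk.span_eq_top
  rw [← one_eq_span]
  exact sup_le le_rfl hN

lemma conductorOrderSubmodule_ne_of_lt (hK : 1 < finrank F K) {k k' : ℕ} (hlt : k < k')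
    [(conductorOrderSubmodule O_F K k).IsLattice F] :
    conductorOrderSubmodule O_F K k' ≠ conductorOrderSubmodule O_F K k := fun h =>
  conductorOrderSubmodule_succ_ne hK k <|
    le_antisymm (conductorOrderSubmodule_antitone k.le_succ)
      (h ▸ conductorOrderSubmodule_antitone hlt)

lemma eq_of_conductorOrderSubmodule_eq (hK : 1 < finrank F K) {k₁ k₂ : ℕ}
    [(conductorOrderSubmodule O_F K k₁).IsLattice F]
    (h : conductorOrderSubmodule O_F K k₁ = conductorOrderSubmodule O_F K k₂) : k₁ = k₂ := by
  by_contra hne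
  rcases Nat.lt_or_gt_of_ne hne with hlt | hlt
  · exact conductorOrderSubmodule_ne_of_lt hK hlt h.symm
  · have : (conductorOrderSubmodule O_F K k₂).IsLattice F := h ▸ inferInstance
    exact conductorOrderSubmodule_ne_of_lt hK hlt h

end Conductor

section Transport

variable {O_F F K V : Type*} [CommRing O_F] [IsDomain O_F] [IsPrincipalIdealRing O_F]
  [IsLocalRing O_F] [Field F] [Algebra O_F F] [IsFractionRing O_F F] [CommRing K] [Algebra F K]
  [Algebra O_F K] [IsScalarTower O_F F K] [AddCommGroup V] [Module K V] [Module F V]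
  [IsScalarTower F K V] [Module O_F V] [IsScalarTower O_F K V] [IsScalarTower O_F F V]

theorem exists_units_smul_eq_of_multiplierOrder_eq (hK : finrank F K = 2) (e : V ≃ₗ[K] K)
    {Λ₁ Λ₂ : Submodule O_F V} [Λ₁.IsLattice F] [Λ₂.IsLattice F]
    (h : multiplierOrder K Λ₁ = multiplierOrder K Λ₂) : ∃ a : Kˣ, a • Λ₁ = Λ₂ := by
  set f := (e : V →ₗ[K] K).restrictScalars O_F
  have := IsLattice.map_linearEquiv e Λ₁
  have := IsLattice.map_linearEquiv e Λ₂
  obtain ⟨x₁, hx₁⟩ := exists_units_smul_multiplierOrder_eq hK (Λ₁.map f)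
  obtain ⟨x₂, hx₂⟩ := exists_units_smul_multiplierOrder_eq hK (Λ₂.map f)
  rw [multiplierOrder_map_linearEquiv_s10] at hx₁ hx₂
  refine ⟨x₂ * x₁⁻¹, map_injective_of_injective (f := f) e.injective ?_⟩
  rw [map_units_smul, ← hx₁, ← hx₂, smul_smul, inv_mul_cancel_right, h]

theorem isLattice_multiplierOrder (hK : finrank F K = 2) (e : V ≃ₗ[K] K) (Λ : Submodule O_F V)
    [Λ.IsLattice F] : (Subalgebra.toSubmodule (multiplierOrder K Λ)).IsLattice F := by
  have := IsLattice.map_linearEquiv e Λ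
  obtain ⟨x, hx⟩ := exists_units_smul_multiplierOrder_eq hK
    (Λ.map ((e : V →ₗ[K] K).restrictScalars O_F))
  rw [multiplierOrder_map_linearEquiv_s10] at hx
  rw [← inv_smul_smul x (Subalgebra.toSubmodule (multiplierOrder K Λ)), hx]
  exact isLattice_units_smul x⁻¹ _

end Transport

theorem vertexFibers_are_Kstar_orbits_general
    (O_F F K V : Type*) [CommRing O_F] [IsDomain O_F] [IsDiscreteValuationRing O_F]
    [Field F] [Algebra O_F F] [IsFractionRing O_F F]
    [CommRing K] [Algebra F K] [Algebra O_F K]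
    [IsScalarTower O_F F K] (hquad : Module.finrank F K = 2)
    [AddCommGroup V] [Module K V] [Module F V] [IsScalarTower F K V]
    [Module O_F V] [IsScalarTower O_F K V] [IsScalarTower O_F F V]
    (b : Basis (Fin 1) K V) :
    ∀ (Λ₁ Λ₂ : Submodule O_F V) (k₁ k₂ : ℕ),
      Λ₁.FG → Submodule.span F (Λ₁ : Set V) = ⊤ →
      Λ₂.FG → Submodule.span F (Λ₂ : Set V) = ⊤ →
      Subalgebra.toSubmodule (multiplierOrder K Λ₁) = conductorOrderSubmodule O_F K k₁ →
      Subalgebra.toSubmodule (multiplierOrder K Λ₂) = conductorOrderSubmodule O_F K k₂ →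
      (k₁ = k₂ ↔ ∃ a : Kˣ, (Λ₂ : Set V) = (fun x => (a : K) • x) '' (Λ₁ : Set V)) := by
  intro Λ₁ Λ₂ k₁ k₂ hfg₁ hspan₁ hfg₂ hspan₂ hO₁ hO₂
  have : Λ₁.IsLattice F := ⟨hfg₁, hspan₁⟩
  have : Λ₂.IsLattice F := ⟨hfg₂, hspan₂⟩
  let e : V ≃ₗ[K] K := b.equivFun ≪≫ₗ LinearEquiv.funUnique (Fin 1) K K
  have hhom : ∀ a : Kˣ, (Λ₂ : Set V) = (fun x => (a : K) • x) '' Λ₁ ↔ a • Λ₁ = Λ₂ := fun a => by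
    have h : ((a • Λ₁ : Submodule O_F V) : Set V) = (fun x => (a : K) • x) '' Λ₁ :=
      coe_pointwise_smul a Λ₁
    rw [← h, SetLike.coe_set_eq, eq_comm]
  simp_rw [hhom]
  constructor
  · rintro rfl
    exact exists_units_smul_eq_of_multiplierOrder_eq hquad e
      (Subalgebra.toSubmodule_injective (hO₁.trans hO₂.symm))
  · rintro ⟨a, rfl⟩
    have : (conductorOrderSubmodule O_F K k₁).IsLattice F :=
      hO₁ ▸ isLattice_multiplierOrder hquad e Λ₁
    exact eq_of_conductorOrderSubmodule_eq (F := F) (hquad ▸ one_lt_two) <| by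
      rw [← hO₁, ← hO₂, multiplierOrder_units_smul]

/-- the fibers `𝒱(k)` of the conductor-exponent map on vertices of the
Bruhat–Tits tree are exactly the `K^×`-orbits: two full lattices have the same conductor
exponent if and only if they are `K^×`-homothetic (note `F^× ⊆ K^×`, so at the level of
vertices this says `K^×` acts transitively on each `𝒱(k)` and distinct `k` give
distinct orbits). -/
theorem vertexFibers_are_Kstar_orbits
    (O_F F K V : Type*) [CommRing O_F] [IsDomain O_F] [IsDiscreteValuationRing O_F]
    [Field F] [Algebra O_F F] [IsFractionRing O_F F]
    [CommRing K] [IsSemisimpleRing K] [Algebra F K] [Algebra O_F K]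
    [IsScalarTower O_F F K] (hquad : Module.finrank F K = 2)
    [AddCommGroup V] [Module K V] [Module F V] [IsScalarTower F K V]
    [Module O_F V] [IsScalarTower O_F K V] [IsScalarTower O_F F V]
    (b : Basis (Fin 1) K V) :
    ∀ (Λ₁ Λ₂ : Submodule O_F V) (k₁ k₂ : ℕ),
      Λ₁.FG → Submodule.span F (Λ₁ : Set V) = ⊤ →
      Λ₂.FG → Submodule.span F (Λ₂ : Set V) = ⊤ →
      Subalgebra.toSubmodule (multiplierOrder K Λ₁) = conductorOrderSubmodule O_F K k₁ →
      Subalgebra.toSubmodule (multiplierOrder K Λ₂) = conductorOrderSubmodule O_F K k₂ →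
      (k₁ = k₂ ↔ ∃ a : Kˣ, (Λ₂ : Set V) = (fun x => (a : K) • x) '' (Λ₁ : Set V)) :=
  vertexFibers_are_Kstar_orbits_general O_F F K V hquad b
end

section
/- Let F be a local field with ring of integers O_F and uniformizer generating p_F, let B be the quaternion division algebra over F with its unique maximal order R, and let w : B^× → ℤ be the normalized valuation (so w(B^×) = ℤ and ker(w|units) gives R^× = {b : w(b) = 0}). Let K ⊆ B be a quadratic field extension of F. Then the double coset space K^× \ B^× / R^× has exactly 2 elements if K/F is unramified and exactly 1 element if K/F is ramified. -/
/-!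
Since `R^× = ker w` and `w` is onto `ℤ`, `b ↦ w b` identifies `K^× \ B^× / R^×` with
`ℤ / w(K^×)`. The group `w(K^×)` contains `w(F^×) ⊇ 2ℤ`: a noncentral `u ∈ B` generates a
proper subfield `F[u]`, of dimension at most `4 / 2`, so `u² = a u + b` with `a, b ∈ F`; the
commutator `uv - vu` conjugates `u` to `a - u`, so `-b = u (a - u) ∈ F^×` has valuation `2 w(u)`.
Hence `w(K^×)` is `2ℤ` or `ℤ` according to the parity of `w` on `K^×`.
-/

open Module

open scoped Classical

namespace Subalgebra

variable {F B : Type*} [Field F] [DivisionRing B] [Algebra F B] [FiniteDimensional F B]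

theorem two_mul_finrank_le_of_ne_top {K : Subalgebra F B} (hK : K ≠ ⊤) :
    2 * finrank F K ≤ finrank F B := by
  obtain ⟨b, -, hb⟩ := SetLike.exists_of_lt (lt_top_iff_ne_top.2 hK)
  have hb0 : b ≠ 0 := fun h => hb (h ▸ K.zero_mem)
  let M := toSubmodule K
  have hinj : Function.Injective (LinearMap.mulRight F b) := mul_left_injective₀ hb0
  have hdisj : Disjoint M (M.map (LinearMap.mulRight F b)) := by
    rw [Submodule.disjoint_def]
    rintro _ hyb ⟨y, hy, rfl⟩
    obtain rfl | hy0 := eq_or_ne y 0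
    · simp
    refine absurd ?_ hb
    have hyinv : y⁻¹ ∈ K := (Algebra.IsIntegral.isIntegral y).inv_mem hy
    simpa [← mul_assoc, inv_mul_cancel₀ hy0] using K.mul_mem hyinv hyb
  have := Submodule.finrank_add_finrank_le_of_disjoint hdisj
  rw [← (Submodule.equivMapOfInjective _ hinj M).finrank_eq, finrank_toSubmodule] at this
  omega

end Subalgebra

theorem exists_mul_self_eq_of_notMem_center {F B : Type*} [Field F] [DivisionRing B]
    [Algebra F B] (hdim : finrank F B = 4) {u : B} (hu : u ∉ Subalgebra.center F B) :
    ∃ a b : F, u * u = algebraMap F B a * u + algebraMap F B b := by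
  have : FiniteDimensional F B := .of_finrank_pos (by omega)
  set K := Algebra.adjoin F {u}
  have huK : u ∈ K := Algebra.self_mem_adjoin_singleton F u
  have hK : K ≠ ⊤ := by
    refine fun htop => hu (Subalgebra.mem_center_iff.2 fun v => ?_)
    exact (Algebra.commute_of_mem_adjoin_self (htop ▸ Algebra.mem_top : v ∈ K)).symm.eq
  have hrank : finrank F K ≤ 2 := by
    have := Subalgebra.two_mul_finrank_le_of_ne_top hK
    omega
  have hindep : LinearIndependent F ![1, u] := by
    refine (LinearIndependent.pair_iff' one_ne_zero).2 fun a ha => hu ?_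
    rw [← ha, Algebra.smul_def, mul_one]
    exact Subalgebra.algebraMap_mem _ a
  have hspan : Submodule.span F {1, u} = Subalgebra.toSubmodule K := by
    apply Submodule.eq_of_le_of_finrank_le
    · rw [Submodule.span_le, Set.insert_subset_iff, Set.singleton_subset_iff]
      exact ⟨K.one_mem, huK⟩
    · have := finrank_span_eq_card hindep
      rw [Matrix.range_cons_cons_empty] at this
      rw [this]
      simpa using hrank
  have huu : u * u ∈ Submodule.span F {1, u} := hspan ▸ K.mul_mem huK huK
  obtain ⟨b, a, h⟩ := Submodule.mem_span_pair.1 huu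
  refine ⟨a, b, ?_⟩
  rw [← h, Algebra.smul_def, Algebra.smul_def, mul_one, add_comm]

theorem mul_commutator_eq_of_mul_self_eq {R A : Type*} [CommSemiring R] [Ring A] [Algebra R A]
    {u : A} {a b : R} (h : u * u = algebraMap R A a * u + algebraMap R A b) (v : A) :
    u * (u * v - v * u) = (u * v - v * u) * (algebraMap R A a - u) := by
  simp only [mul_sub, sub_mul, ← mul_assoc]
  rw [h, mul_assoc v u u, h]
  simp only [mul_add, add_mul, mul_assoc, Algebra.left_comm, ← Algebra.commutes]
  abel

section AdditiveValuation

variable {G : Type*} [Group G] {w : G → ℤ}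

theorem map_zpow_of_map_mul (hw : ∀ a b, w (a * b) = w a + w b) (g : G) (m : ℤ) :
    w (g ^ m) = m * w g := by
  let φ : G →* Multiplicative ℤ := MonoidHom.mk' (fun g => .ofAdd (w g)) fun a b => by
    rw [hw]; rfl
  have := congrArg Multiplicative.toAdd (map_zpow φ g m)
  rwa [toAdd_zpow, smul_eq_mul] at this

theorem map_eq_of_semiconjBy (hw : ∀ a b, w (a * b) = w a + w b) {c x y : G}
    (h : SemiconjBy c x y) : w x = w y := by
  have := congrArg w h
  rw [hw, hw] at this
  omega

end AdditiveValuation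

theorem exists_valuation_algebraMap_eq_two_mul {F B : Type*} [Field F] [DivisionRing B]
    [Algebra F B] (hdim : finrank F B = 4) (hcentral : Subalgebra.center F B = ⊥)
    {w : Bˣ → ℤ} (hw : ∀ a b, w (a * b) = w a + w b) (u : Bˣ) :
    ∃ c : Fˣ, w (Units.map (algebraMap F B : F →* B) c) = 2 * w u := by
  by_cases hu : (u : B) ∈ Subalgebra.center F B
  · rw [hcentral, Algebra.mem_bot] at hu
    obtain ⟨a, ha⟩ := hu
    have ha0 : a ≠ 0 := by rintro rfl; exact u.ne_zero (by simpa using ha.symm)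
    refine ⟨Units.mk0 a ha0 ^ 2, ?_⟩
    have hmap : Units.map (algebraMap F B : F →* B) (Units.mk0 a ha0) = u := Units.ext ha
    rw [map_pow, hmap, pow_two, hw, two_mul]
  obtain ⟨a, b, h⟩ := exists_mul_self_eq_of_notMem_center hdim hu
  obtain ⟨v, hv⟩ : ∃ v : B, u * v - v * u ≠ 0 := by
    simpa [Subalgebra.mem_center_iff, sub_eq_zero, eq_comm] using hu
  have hconj := mul_commutator_eq_of_mul_self_eq h v
  have hnorm : (u : B) * (algebraMap F B a - u) = algebraMap F B (-b) := by
    rw [mul_sub, ← Algebra.commutes, h, map_neg]; abel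
  have hd : algebraMap F B a - u ≠ 0 := by
    intro hd
    rw [sub_eq_zero] at hd
    exact hu (hd ▸ Subalgebra.algebraMap_mem _ a)
  have hb : -b ≠ 0 := by
    rintro hb
    rw [hb, map_zero] at hnorm
    exact mul_ne_zero u.ne_zero hd hnorm
  refine ⟨Units.mk0 (-b) hb, ?_⟩
  have hconj' : SemiconjBy (Units.mk0 _ hv) (Units.mk0 _ hd) u := Units.ext hconj.symm
  have hnorm' : u * Units.mk0 _ hd = Units.map (algebraMap F B : F →* B) (Units.mk0 (-b) hb) :=
    Units.ext hnorm
  rw [← hnorm', hw, ← map_eq_of_semiconjBy hw hconj', two_mul]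

theorem natCard_quot_doubleCoset_eq {G : Type*} [Group G] {w : G → ℤ}
    (hw : ∀ a b, w (a * b) = w a + w b) (hwsurj : Function.Surjective w) {T : Set G}
    {N : AddSubgroup ℤ} (hT : ∀ k ∈ T, w k ∈ N) (hN : ∀ n ∈ N, ∃ k ∈ T, w k = n) :
    Nat.card (Quot fun b₁ b₂ : G => ∃ k r : G, k ∈ T ∧ w r = 0 ∧ b₂ = k * b₁ * r) =
      Nat.card (ℤ ⧸ N) := by
  let f : (Quot fun b₁ b₂ : G => ∃ k r : G, k ∈ T ∧ w r = 0 ∧ b₂ = k * b₁ * r) → ℤ ⧸ N :=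
    Quot.lift (fun b => (w b : ℤ ⧸ N)) <| by
      rintro a _ ⟨k, r, hk, hr, rfl⟩
      rw [QuotientAddGroup.eq, hw, hw, hr]
      simpa using hT k hk
  refine Nat.card_congr (Equiv.ofBijective f ⟨?_, ?_⟩)
  · rintro ⟨a⟩ ⟨b⟩ hab
    obtain ⟨k, hk, hkw⟩ := hN _ (QuotientAddGroup.eq.1 hab)
    refine Quot.sound ⟨k, a⁻¹ * k⁻¹ * b, hk, ?_, by group⟩
    have := congrArg w (show k * a * (a⁻¹ * k⁻¹ * b) = b by group)
    rw [hw, hw] at this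
    omega
  · intro z
    obtain ⟨n, rfl⟩ := QuotientAddGroup.mk_surjective z
    obtain ⟨b, rfl⟩ := hwsurj n
    exact ⟨Quot.mk _ b, rfl⟩

theorem quaternion_double_coset_count_general
    {F B : Type*}
    [Field F]
    [DivisionRing B] [Algebra F B]
    (hdim : Module.finrank F B = 4) (hcentral : Subalgebra.center F B = ⊥)
    (w : Bˣ → ℤ) (hw : ∀ a b : Bˣ, w (a * b) = w a + w b)
    (hwsurj : Function.Surjective w)
    (S : Subalgebra F B) :
    Nat.card (Quot (fun b₁ b₂ : Bˣ =>
        ∃ k r : Bˣ, (k : B) ∈ S ∧ w r = 0 ∧ b₂ = k * b₁ * r)) =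
      if ∀ u : Bˣ, (u : B) ∈ S → Even (w u) then 2 else 1 := by
  obtain ⟨u₀, hu₀⟩ := hwsurj 1
  obtain ⟨c, hc⟩ := exists_valuation_algebraMap_eq_two_mul hdim hcentral hw u₀
  have hscalar (m : ℤ) : ∃ k : Bˣ, (k : B) ∈ S ∧ w k = 2 * m :=
    ⟨Units.map (algebraMap F B : F →* B) (c ^ m), S.algebraMap_mem _, by
      rw [map_zpow, map_zpow_of_map_mul hw, hc, hu₀]; ring⟩
  split_ifs with heven
  · refine (natCard_quot_doubleCoset_eq hw hwsurj (T := {k | (k : B) ∈ S})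
      (N := AddSubgroup.zmultiples ((2 : ℕ) : ℤ)) (fun k hk => ?_) (fun n hn => ?_)).trans ?_
    · exact Int.mem_zmultiples_iff.2 (even_iff_two_dvd.1 (heven k hk))
    · obtain ⟨m, rfl⟩ := Int.mem_zmultiples_iff.1 hn
      exact hscalar m
    · rw [Nat.card_congr (Int.quotientZMultiplesNatEquivZMod 2).toEquiv, Nat.card_zmod]
  · push Not at heven
    obtain ⟨u₁, hu₁S, hu₁odd⟩ := heven
    refine (natCard_quot_doubleCoset_eq hw hwsurj (T := {k | (k : B) ∈ S}) (N := ⊤)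
      (fun _ _ => trivial) (fun n _ => ?_)).trans ?_
    · obtain ⟨m, hm⟩ | ⟨m, hm⟩ := Int.even_or_odd n
      · obtain ⟨k, hkS, hkw⟩ := hscalar m
        exact ⟨k, hkS, by omega⟩
      · obtain ⟨j, hj⟩ := Int.not_even_iff_odd.1 hu₁odd
        obtain ⟨k, hkS, hkw⟩ := hscalar (m - j)
        exact ⟨k * u₁, S.mul_mem hkS hu₁S, by rw [hw]; omega⟩
    · have := QuotientAddGroup.subsingleton_quotient_top (G := ℤ)
      exact Nat.card_unique

/-- let `F` be a local field (fraction field of a DVR `O_F`), `B` the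
quaternion division algebra over `F` with its unique maximal order `R`, and
`w : B^× → ℤ` the normalized valuation (a surjective homomorphism with
`R^× = {b : w b = 0}`). Let `K ⊆ B` be a quadratic field extension of `F` (a commutative
subalgebra of dimension 2 over `F`). Then the double coset space `K^× \ B^× / R^×` has
exactly 2 elements if `K/F` is unramified (i.e. `w(K^×) ⊆ 2ℤ`) and exactly 1 element if
`K/F` is ramified. -/
theorem quaternion_double_coset_count
    {O_F F B : Type*} [CommRing O_F] [IsDomain O_F] [IsDiscreteValuationRing O_F]
    [Field F] [Algebra O_F F] [IsFractionRing O_F F]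
    [Finite (IsLocalRing.ResidueField O_F)]
    [DivisionRing B] [Algebra F B]
    (hdim : Module.finrank F B = 4) (hcentral : Subalgebra.center F B = ⊥)
    (w : Bˣ → ℤ) (hw : ∀ a b : Bˣ, w (a * b) = w a + w b)
    (hwsurj : Function.Surjective w)
    (S : Subalgebra F B) (hS2 : Module.finrank F S = 2)
    (hScomm : ∀ x ∈ S, ∀ y ∈ S, x * y = y * x) (hSfield : ∀ x ∈ S, x ≠ 0 → x⁻¹ ∈ S) :
    Nat.card (Quot (fun b₁ b₂ : Bˣ =>
        ∃ k r : Bˣ, (k : B) ∈ S ∧ w r = 0 ∧ b₂ = k * b₁ * r)) =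
      if ∀ u : Bˣ, (u : B) ∈ S → Even (w u) then 2 else 1 :=
  quaternion_double_coset_count_general hdim hcentral w hw hwsurj S
end
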